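/- arXiv:2207.10820 — 9 statements merged into one kernel-verified Lean document; each statement's English description precedes it below -/
import Mathlib

section
/- Fix an integer N ≥ 1, data points d_1, …, d_N in ℝ^m, a partition of {1, …, N} into K nonempty clusters C_1, …, C_K with centroids d̄_k = (1/|C_k|) ∑_{i∈C_k} d_i and weights w_k = |C_k|/N, a nonempty convex set S ⊆ ℝ^m containing all d_i, a real p ≥ 1, and ε > 0. If g : ℝ^m → ℝ is concave, then ḡ^N ≤ ḡ^K, where ḡ^N = sup{ (1/N) ∑_{i=1}^N g(v_i) : v_i ∈ S for all i, (1/N) ∑_{i=1}^N ‖v_i − d_i‖₂^p ≤ ε^p } and ḡ^K = sup{ ∑_{k=1}^K w_k g(u_k) : u_k ∈ S for all k, ∑_{k=1}^K w_k ‖u_k − d̄_k‖₂^p ≤ ε^p } (suprema taken in the extended reals). -/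
/-!
Every feasible point `v` of the data-driven problem yields a feasible point of the clustered
problem by averaging within clusters, `u k = |C k|⁻¹ • ∑ i ∈ C k, v i`. Weighting cluster
averages by `|C k| / N` regroups a sum over the data into `1 / N` times the full sum, so
Jensen's inequality for the convex function `x ↦ ‖x‖ ^ p` shows that `u` satisfies the
clustered budget, and Jensen's inequality for the concave `g` shows that `u` is worth at least
as much as `v`.
-/

open Finset Function

section UniformJensen

variable {ι E : Type*} [AddCommGroup E] [Module ℝ E] {S : Set E} {s : Finset ι} {v : ι → E}

lemma sum_const_card_inv_eq_one (hs : s.Nonempty) : ∑ _i ∈ s, (#s : ℝ)⁻¹ = 1 := by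
  rw [sum_const, nsmul_eq_mul, mul_inv_cancel₀ (by exact_mod_cast hs.card_pos.ne')]

lemma Convex.card_inv_smul_sum_mem (hS : Convex ℝ S) (hs : s.Nonempty)
    (hv : ∀ i ∈ s, v i ∈ S) : (#s : ℝ)⁻¹ • ∑ i ∈ s, v i ∈ S := by
  rw [smul_sum]
  exact hS.sum_mem (fun _ _ => by positivity) (sum_const_card_inv_eq_one hs) hv

lemma ConvexOn.map_card_inv_smul_sum_le {f : E → ℝ} (hf : ConvexOn ℝ S f) (hs : s.Nonempty)
    (hv : ∀ i ∈ s, v i ∈ S) :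
    f ((#s : ℝ)⁻¹ • ∑ i ∈ s, v i) ≤ (#s : ℝ)⁻¹ * ∑ i ∈ s, f (v i) := by
  simpa only [smul_sum, mul_sum, smul_eq_mul] using
    hf.map_sum_le (fun _ _ => by positivity) (sum_const_card_inv_eq_one hs) hv

lemma ConcaveOn.card_inv_mul_sum_le_map {f : E → ℝ} (hf : ConcaveOn ℝ S f) (hs : s.Nonempty)
    (hv : ∀ i ∈ s, v i ∈ S) :
    (#s : ℝ)⁻¹ * ∑ i ∈ s, f (v i) ≤ f ((#s : ℝ)⁻¹ • ∑ i ∈ s, v i) := by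
  simpa only [smul_sum, mul_sum, smul_eq_mul] using
    hf.le_map_sum (fun _ _ => by positivity) (sum_const_card_inv_eq_one hs) hv

end UniformJensen

lemma convexOn_norm_rpow {E : Type*} [SeminormedAddCommGroup E] [NormedSpace ℝ E] {p : ℝ}
    (hp : 1 ≤ p) : ConvexOn ℝ Set.univ fun x : E => ‖x‖ ^ p := by
  refine ⟨convex_univ, fun x _ y _ a b ha hb hab => ?_⟩
  calc ‖a • x + b • y‖ ^ p ≤ (a * ‖x‖ + b * ‖y‖) ^ p := by
        gcongr
        refine (norm_add_le _ _).trans_eq ?_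
        rw [norm_smul_of_nonneg ha, norm_smul_of_nonneg hb]
    _ ≤ a * ‖x‖ ^ p + b * ‖y‖ ^ p :=
        (convexOn_rpow hp).2 (norm_nonneg x) (norm_nonneg y) ha hb hab

section Partition

variable {ι κ : Type*} [Fintype ι] [Fintype κ] {C : κ → Finset ι}

lemma sum_eq_sum_sum_of_partition {M : Type*} [AddCommMonoid M]
    (hdisj : Pairwise (Disjoint on C)) (hcover : ∀ i, ∃ k, i ∈ C k) (f : ι → M) :
    ∑ i, f i = ∑ k, ∑ i ∈ C k, f i := by
  classical
  have huniv : (univ : Finset ι) = univ.biUnion C := by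
    ext i
    simpa using hcover i
  rw [huniv, sum_biUnion fun k _ l _ hkl => hdisj hkl]

lemma sum_card_div_mul_average_of_partition (hdisj : Pairwise (Disjoint on C))
    (hcover : ∀ i, ∃ k, i ∈ C k) (N : ℝ) (f : ι → ℝ) :
    ∑ k, (#(C k) : ℝ) / N * ((#(C k) : ℝ)⁻¹ * ∑ i ∈ C k, f i) = 1 / N * ∑ i, f i := by
  rw [sum_eq_sum_sum_of_partition hdisj hcover, mul_sum]
  refine sum_congr rfl fun k _ => ?_
  rcases (C k).eq_empty_or_nonempty with hk | hk
  · simp [hk]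
  · have hcard : (#(C k) : ℝ) ≠ 0 := by exact_mod_cast hk.card_pos.ne'
    rw [div_mul_eq_mul_div, mul_inv_cancel_left₀ hcard, one_div_mul_eq_div]

end Partition

theorem stmt_0_general {m N K : ℕ}
    (d : Fin N → EuclideanSpace ℝ (Fin m))
    (C : Fin K → Finset (Fin N))
    (hCne : ∀ k, (C k).Nonempty)
    (hCdisj : ∀ k l, k ≠ l → Disjoint (C k) (C l))
    (hCcover : ∀ i, ∃ k, i ∈ C k)
    (dbar : Fin K → EuclideanSpace ℝ (Fin m))
    (hdbar : ∀ k, dbar k = ((C k).card : ℝ)⁻¹ • ∑ i ∈ C k, d i)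
    (w : Fin K → ℝ) (hw : ∀ k, w k = ((C k).card : ℝ) / N)
    (S : Set (EuclideanSpace ℝ (Fin m)))
    (hSconv : Convex ℝ S)
    (p : ℝ) (hp : 1 ≤ p) (ε : ℝ)
    (g : EuclideanSpace ℝ (Fin m) → ℝ) (hg : ConcaveOn ℝ Set.univ g) :
    sSup {y : EReal | ∃ v : Fin N → EuclideanSpace ℝ (Fin m),
        (∀ i, v i ∈ S) ∧
        (1 / (N : ℝ)) * ∑ i, ‖v i - d i‖ ^ p ≤ ε ^ p ∧
        y = (((1 / (N : ℝ)) * ∑ i, g (v i) : ℝ) : EReal)} ≤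
      sSup {y : EReal | ∃ u : Fin K → EuclideanSpace ℝ (Fin m),
        (∀ k, u k ∈ S) ∧
        ∑ k, w k * ‖u k - dbar k‖ ^ p ≤ ε ^ p ∧
        y = ((∑ k, w k * g (u k) : ℝ) : EReal)} := by
  refine sSup_le ?_
  rintro _ ⟨v, hvS, hvε, rfl⟩
  have hdisj : Pairwise (Disjoint on C) := fun k l => hCdisj k l
  have hw0 : ∀ k, 0 ≤ w k := fun k => by rw [hw]; positivity
  have hregroup (f : Fin N → ℝ) :
      ∑ k, w k * ((#(C k) : ℝ)⁻¹ * ∑ i ∈ C k, f i) = 1 / N * ∑ i, f i := by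
    simp only [hw]
    exact sum_card_div_mul_average_of_partition hdisj hCcover N f
  set u := fun k => (#(C k) : ℝ)⁻¹ • ∑ i ∈ C k, v i
  have hu_budget : ∑ k, w k * ‖u k - dbar k‖ ^ p ≤ ε ^ p :=
    calc ∑ k, w k * ‖u k - dbar k‖ ^ p
        ≤ ∑ k, w k * ((#(C k) : ℝ)⁻¹ * ∑ i ∈ C k, ‖v i - d i‖ ^ p) := by
          gcongr with k
          · exact hw0 k
          rw [hdbar, ← smul_sub, ← sum_sub_distrib]
          exact (convexOn_norm_rpow hp).map_card_inv_smul_sum_le (hCne k) fun _ _ => trivial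
      _ = 1 / N * ∑ i, ‖v i - d i‖ ^ p := hregroup _
      _ ≤ ε ^ p := hvε
  have hu_value : 1 / N * ∑ i, g (v i) ≤ ∑ k, w k * g (u k) := by
    rw [← hregroup]
    gcongr with k
    · exact hw0 k
    exact hg.card_inv_mul_sum_le_map (hCne k) fun _ _ => trivial
  have hu_mem (k : Fin K) : u k ∈ S := hSconv.card_inv_smul_sum_mem (hCne k) fun i _ => hvS i
  exact le_sSup_of_le ⟨u, hu_mem, hu_budget, rfl⟩ (by exact_mod_cast hu_value)

/-- clustering can only increase the worst-case value:
`ḡ^N ≤ ḡ^K` for concave `g` (suprema in the extended reals). -/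
theorem stmt_0 {m N K : ℕ} (hN : 1 ≤ N) (hK : 1 ≤ K)
    (d : Fin N → EuclideanSpace ℝ (Fin m))
    (C : Fin K → Finset (Fin N))
    (hCne : ∀ k, (C k).Nonempty)
    (hCdisj : ∀ k l, k ≠ l → Disjoint (C k) (C l))
    (hCcover : ∀ i, ∃ k, i ∈ C k)
    (dbar : Fin K → EuclideanSpace ℝ (Fin m))
    (hdbar : ∀ k, dbar k = ((C k).card : ℝ)⁻¹ • ∑ i ∈ C k, d i)
    (w : Fin K → ℝ) (hw : ∀ k, w k = ((C k).card : ℝ) / N)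
    (S : Set (EuclideanSpace ℝ (Fin m))) (hSne : S.Nonempty)
    (hSconv : Convex ℝ S) (hdS : ∀ i, d i ∈ S)
    (p : ℝ) (hp : 1 ≤ p) (ε : ℝ) (hε : 0 < ε)
    (g : EuclideanSpace ℝ (Fin m) → ℝ) (hg : ConcaveOn ℝ Set.univ g) :
    sSup {y : EReal | ∃ v : Fin N → EuclideanSpace ℝ (Fin m),
        (∀ i, v i ∈ S) ∧
        (1 / (N : ℝ)) * ∑ i, ‖v i - d i‖ ^ p ≤ ε ^ p ∧
        y = (((1 / (N : ℝ)) * ∑ i, g (v i) : ℝ) : EReal)} ≤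
      sSup {y : EReal | ∃ u : Fin K → EuclideanSpace ℝ (Fin m),
        (∀ k, u k ∈ S) ∧
        ∑ k, w k * ‖u k - dbar k‖ ^ p ≤ ε ^ p ∧
        y = ((∑ k, w k * g (u k) : ℝ) : EReal)} :=
  stmt_0_general d C hCne hCdisj hCcover dbar hdbar w hw S hSconv p hp ε g hg
end

section
/- Fix an integer N ≥ 1, data points d_1, …, d_N in ℝ^m, a partition of {1, …, N} into K nonempty clusters C_1, …, C_K with centroids d̄_k = (1/|C_k|) ∑_{i∈C_k} d_i and weights w_k = |C_k|/N, a nonempty convex set S ⊆ ℝ^m containing all d_i, a real p ≥ 1, and ε > 0. Let D(K) = (1/N) ∑_{k=1}^K ∑_{i∈C_k} ‖d_i − d̄_k‖₂². If g : ℝ^m → ℝ is concave and differentiable with ‖∇g(v) − ∇g(u)‖₂ ≤ L‖u − v‖₂ for all u, v ∈ ℝ^m, then ḡ^K ≤ ḡ^{N*} + (L/2) D(K), where ḡ^K = sup{ ∑_{k=1}^K w_k g(u_k) : u_k ∈ S for all k, ∑_{k=1}^K w_k ‖u_k − d̄_k‖₂^p ≤ ε^p } and ḡ^{N*} = sup{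 (1/N) ∑_{i=1}^N g(v_i) : (1/N) ∑_{i=1}^N ‖v_i − d_i‖₂^p ≤ ε^p } (suprema in the extended reals). -/
/-!
Translate each cluster `C k` rigidly so that its centroid moves to the centroid-level point `u k`:
`v i = u k + (d i - dbar k)`. Then `v i - d i = u k - dbar k`, so `v` has the same transport
cost and is feasible for the unclustered problem. For `L`-smooth `g` the descent lemma gives
`g (u + e) ≥ g u + Dg(u) e - (L/2) ‖e‖²`; summed over a cluster the linear terms cancel, since
the deviations `d i - dbar k` sum to zero, and what is lost is exactly `(L/2) D(K)`.
-/

open Finset Set Function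

theorem norm_sub_sub_fderiv_le_of_lipschitz_fderiv {E F : Type*} [NormedAddCommGroup E]
    [NormedSpace ℝ E] [NormedAddCommGroup F] [NormedSpace ℝ F] {f : E → F} {L : ℝ}
    (hf : Differentiable ℝ f) (hL : ∀ x y, ‖fderiv ℝ f y - fderiv ℝ f x‖ ≤ L * ‖y - x‖)
    (x y : E) : ‖f y - f x - fderiv ℝ f x (y - x)‖ ≤ L / 2 * ‖y - x‖ ^ 2 := by
  set e := y - x
  have hφ : ∀ t : ℝ, HasDerivAt (fun t : ℝ => f (x + t • e) - f x - t • fderiv ℝ f x e)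
      (fderiv ℝ f (x + t • e) e - fderiv ℝ f x e) t := by
    intro t
    have hline : HasDerivAt (fun t : ℝ => x + t • e) e t := by
      simpa using ((hasDerivAt_id t).smul_const e).const_add x
    exact (((hf _).hasFDerivAt.comp_hasDerivAt t hline).sub_const (f x)).sub
      (by simpa using (hasDerivAt_id t).smul_const (fderiv ℝ f x e))
  have hB : ∀ t : ℝ, HasDerivAt (fun t : ℝ => L / 2 * ‖e‖ ^ 2 * t ^ 2) (L * ‖e‖ ^ 2 * t) t := by
    intro t
    exact ((hasDerivAt_pow 2 t).const_mul (L / 2 * ‖e‖ ^ 2)).congr_deriv (by norm_num; ring)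
  have hbound : ∀ t ∈ Ico (0 : ℝ) 1,
      ‖fderiv ℝ f (x + t • e) e - fderiv ℝ f x e‖ ≤ L * ‖e‖ ^ 2 * t := by
    rintro t ⟨ht0, -⟩
    calc ‖fderiv ℝ f (x + t • e) e - fderiv ℝ f x e‖
        = ‖(fderiv ℝ f (x + t • e) - fderiv ℝ f x) e‖ := rfl
      _ ≤ ‖fderiv ℝ f (x + t • e) - fderiv ℝ f x‖ * ‖e‖ := ContinuousLinearMap.le_opNorm _ _
      _ ≤ L * ‖x + t • e - x‖ * ‖e‖ := by gcongr; exact hL _ _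
      _ = L * ‖e‖ ^ 2 * t := by
        rw [add_sub_cancel_left, norm_smul, Real.norm_of_nonneg ht0]; ring
  have := image_norm_le_of_norm_deriv_right_le_deriv_boundary
    (fun t _ => (hφ t).continuousAt.continuousWithinAt) (fun t _ => (hφ t).hasDerivWithinAt)
    (by simp) hB hbound (right_mem_Icc.2 zero_le_one)
  simpa [e] using this

theorem norm_fderiv_sub_fderiv_eq_norm_gradient_sub_gradient {F : Type*} [NormedAddCommGroup F]
    [InnerProductSpace ℝ F] [CompleteSpace F] (f : F → ℝ) (x y : F) :
    ‖fderiv ℝ f y - fderiv ℝ f x‖ = ‖gradient f y - gradient f x‖ := by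
  rw [gradient, gradient, ← map_sub, LinearIsometryEquiv.norm_map]

theorem card_mul_le_sum_add_of_sum_eq_zero {E ι : Type*} [NormedAddCommGroup E]
    [NormedSpace ℝ E] {g : E → ℝ} {L : ℝ} (hg : Differentiable ℝ g)
    (hL : ∀ x y, ‖fderiv ℝ g y - fderiv ℝ g x‖ ≤ L * ‖y - x‖)
    (s : Finset ι) (e : ι → E) (he : ∑ i ∈ s, e i = 0) (u : E) :
    #s * g u ≤ ∑ i ∈ s, g (u + e i) + L / 2 * ∑ i ∈ s, ‖e i‖ ^ 2 := by
  have hpoint : ∀ i ∈ s, g u + fderiv ℝ g u (e i) ≤ g (u + e i) + L / 2 * ‖e i‖ ^ 2 := by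
    intro i _
    have := norm_sub_sub_fderiv_le_of_lipschitz_fderiv hg hL u (u + e i)
    rw [add_sub_cancel_left, Real.norm_eq_abs] at this
    linarith [neg_abs_le (g (u + e i) - g u - fderiv ℝ g u (e i))]
  have hlin : ∑ i ∈ s, fderiv ℝ g u (e i) = 0 := by rw [← map_sum, he, map_zero]
  have := Finset.sum_le_sum hpoint
  rwa [sum_add_distrib, sum_add_distrib, hlin, sum_const, nsmul_eq_mul, add_zero,
    ← mul_sum] at this

theorem sum_sub_inv_card_smul_sum_eq_zero {K E ι : Type*} [DivisionRing K] [CharZero K]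
    [AddCommGroup E] [Module K E] {s : Finset ι} (hs : s.Nonempty) (d : ι → E) :
    ∑ i ∈ s, (d i - (#s : K)⁻¹ • ∑ j ∈ s, d j) = 0 := by
  have hcard : (#s : K) ≠ 0 := Nat.cast_ne_zero.2 hs.card_pos.ne'
  rw [sum_sub_distrib, sum_const, ← Nat.cast_smul_eq_nsmul K, smul_smul,
    mul_inv_cancel₀ hcard, one_smul, sub_self]

section Partition

variable {ι κ : Type*} {C : κ → Finset ι}

theorem sum_sum_eq_sum_of_partition [Fintype ι] [Fintype κ] {M : Type*} [AddCommMonoid M]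
    (hdisj : Pairwise (Disjoint on C)) (hcover : ∀ i, ∃ k, i ∈ C k) (f : ι → M) :
    ∑ k, ∑ i ∈ C k, f i = ∑ i, f i := by
  classical
  rw [← sum_biUnion (hdisj.set_pairwise _)]
  congr
  exact eq_univ_of_forall fun i => by simpa using hcover i

theorem exists_forall_mem_eq_of_partition {α : Type*} (hdisj : Pairwise (Disjoint on C))
    (hcover : ∀ i, ∃ k, i ∈ C k) (F : κ → ι → α) :
    ∃ v : ι → α, ∀ k, ∀ i ∈ C k, v i = F k i := by
  choose c hc using hcover
  refine ⟨fun i => F (c i) i, fun k i hi => ?_⟩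
  obtain rfl : c i = k := by
    by_contra hne
    exact disjoint_left.1 (hdisj hne) (hc i) hi
  rfl

end Partition

section ClusterShift

variable {ι κ E : Type*} [Fintype ι] [Fintype κ] [NormedAddCommGroup E]
  {C : κ → Finset ι} (hdisj : Pairwise (Disjoint on C)) (hcover : ∀ i, ∃ k, i ∈ C k)
  {d v : ι → E} {dbar u : κ → E} (hv : ∀ k, ∀ i ∈ C k, v i = u k + (d i - dbar k))
include hdisj hcover hv

theorem sum_apply_sub_eq_sum_card_mul_of_partition (f : E → ℝ) :
    ∑ i, f (v i - d i) = ∑ k, #(C k) * f (u k - dbar k) := by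
  rw [← sum_sum_eq_sum_of_partition hdisj hcover]
  refine sum_congr rfl fun k _ => ?_
  have hshift : ∀ i ∈ C k, f (v i - d i) = f (u k - dbar k) := fun i hi => by
    rw [hv k i hi]
    congr 1
    abel
  rw [sum_congr rfl hshift, sum_const, nsmul_eq_mul]

theorem sum_card_mul_le_sum_add_of_partition [NormedSpace ℝ E] (hne : ∀ k, (C k).Nonempty)
    (hdbar : ∀ k, dbar k = (#(C k) : ℝ)⁻¹ • ∑ i ∈ C k, d i) {g : E → ℝ} {L : ℝ}
    (hg : Differentiable ℝ g) (hL : ∀ x y, ‖fderiv ℝ g y - fderiv ℝ g x‖ ≤ L * ‖y - x‖) :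
    ∑ k, #(C k) * g (u k) ≤
      ∑ i, g (v i) + L / 2 * ∑ k, ∑ i ∈ C k, ‖d i - dbar k‖ ^ 2 := by
  rw [← sum_sum_eq_sum_of_partition hdisj hcover, mul_sum, ← sum_add_distrib]
  refine sum_le_sum fun k _ => ?_
  rw [sum_congr rfl fun i hi => congrArg g (hv k i hi)]
  refine card_mul_le_sum_add_of_sum_eq_zero hg hL (C k) (fun i => d i - dbar k) ?_ (u k)
  rw [hdbar]
  exact sum_sub_inv_card_smul_sum_eq_zero (hne k) d

end ClusterShift

theorem stmt_1_general {m N K : ℕ}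
    (d : Fin N → EuclideanSpace ℝ (Fin m))
    (C : Fin K → Finset (Fin N))
    (hCne : ∀ k, (C k).Nonempty)
    (hCdisj : ∀ k l, k ≠ l → Disjoint (C k) (C l))
    (hCcover : ∀ i, ∃ k, i ∈ C k)
    (dbar : Fin K → EuclideanSpace ℝ (Fin m))
    (hdbar : ∀ k, dbar k = ((C k).card : ℝ)⁻¹ • ∑ i ∈ C k, d i)
    (w : Fin K → ℝ) (hw : ∀ k, w k = ((C k).card : ℝ) / N)
    (S : Set (EuclideanSpace ℝ (Fin m)))
    (p : ℝ) (ε : ℝ)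
    (DK : ℝ) (hDK : DK = (1 / (N : ℝ)) * ∑ k, ∑ i ∈ C k, ‖d i - dbar k‖ ^ 2)
    (g : EuclideanSpace ℝ (Fin m) → ℝ) (L : ℝ)
    (hdiff : Differentiable ℝ g)
    (hlip : ∀ u v, ‖gradient g v - gradient g u‖ ≤ L * ‖u - v‖) :
    sSup {y : EReal | ∃ u : Fin K → EuclideanSpace ℝ (Fin m),
        (∀ k, u k ∈ S) ∧
        ∑ k, w k * ‖u k - dbar k‖ ^ p ≤ ε ^ p ∧
        y = ((∑ k, w k * g (u k) : ℝ) : EReal)} ≤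
      sSup {y : EReal | ∃ v : Fin N → EuclideanSpace ℝ (Fin m),
        (1 / (N : ℝ)) * ∑ i, ‖v i - d i‖ ^ p ≤ ε ^ p ∧
        y = (((1 / (N : ℝ)) * ∑ i, g (v i) : ℝ) : EReal)} +
      ((L / 2 * DK : ℝ) : EReal) := by
  have hL x y : ‖fderiv ℝ g y - fderiv ℝ g x‖ ≤ L * ‖y - x‖ := by
    rw [norm_fderiv_sub_fderiv_eq_norm_gradient_sub_gradient, norm_sub_rev y]; exact hlip x y
  have hdisj : Pairwise (Disjoint on C) := fun k l => hCdisj k l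
  refine sSup_le ?_
  rintro _ ⟨u, -, hu, rfl⟩
  obtain ⟨v, hv⟩ := exists_forall_mem_eq_of_partition hdisj hCcover
    fun k i => u k + (d i - dbar k)
  have hweights (f : Fin K → ℝ) : 1 / (N : ℝ) * ∑ k, #(C k) * f k = ∑ k, w k * f k := by
    simp only [hw, mul_sum]
    exact sum_congr rfl fun k _ => by ring
  have hfeas : 1 / (N : ℝ) * ∑ i, ‖v i - d i‖ ^ p ≤ ε ^ p := by
    rwa [sum_apply_sub_eq_sum_card_mul_of_partition hdisj hCcover hv (‖·‖ ^ p), hweights]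
  have hval : ∑ k, w k * g (u k) ≤ 1 / (N : ℝ) * ∑ i, g (v i) + L / 2 * DK := by
    have := mul_le_mul_of_nonneg_left
      (sum_card_mul_le_sum_add_of_partition hdisj hCcover hv hCne hdbar hdiff hL)
      (by positivity : (0 : ℝ) ≤ 1 / N)
    rw [hweights] at this
    exact this.trans_eq (by rw [hDK]; ring)
  calc ((∑ k, w k * g (u k) : ℝ) : EReal)
      ≤ (((1 / (N : ℝ)) * ∑ i, g (v i) : ℝ) : EReal) + ((L / 2 * DK : ℝ) : EReal) := by
        exact_mod_cast hval
    _ ≤ _ := by gcongr; exact le_sSup ⟨v, hfeas, rfl⟩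

/-- for concave `L`-smooth `g`, `ḡ^K ≤ ḡ^{N*} + (L/2) D(K)`,
where `ḡ^{N*}` drops the support constraint (suprema in the extended reals). -/
theorem stmt_1 {m N K : ℕ} (hN : 1 ≤ N) (hK : 1 ≤ K)
    (d : Fin N → EuclideanSpace ℝ (Fin m))
    (C : Fin K → Finset (Fin N))
    (hCne : ∀ k, (C k).Nonempty)
    (hCdisj : ∀ k l, k ≠ l → Disjoint (C k) (C l))
    (hCcover : ∀ i, ∃ k, i ∈ C k)
    (dbar : Fin K → EuclideanSpace ℝ (Fin m))
    (hdbar : ∀ k, dbar k = ((C k).card : ℝ)⁻¹ • ∑ i ∈ C k, d i)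
    (w : Fin K → ℝ) (hw : ∀ k, w k = ((C k).card : ℝ) / N)
    (S : Set (EuclideanSpace ℝ (Fin m))) (hSne : S.Nonempty)
    (hSconv : Convex ℝ S) (hdS : ∀ i, d i ∈ S)
    (p : ℝ) (hp : 1 ≤ p) (ε : ℝ) (hε : 0 < ε)
    (DK : ℝ) (hDK : DK = (1 / (N : ℝ)) * ∑ k, ∑ i ∈ C k, ‖d i - dbar k‖ ^ 2)
    (g : EuclideanSpace ℝ (Fin m) → ℝ) (L : ℝ)
    (hg : ConcaveOn ℝ Set.univ g)
    (hdiff : Differentiable ℝ g)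
    (hlip : ∀ u v, ‖gradient g v - gradient g u‖ ≤ L * ‖u - v‖) :
    sSup {y : EReal | ∃ u : Fin K → EuclideanSpace ℝ (Fin m),
        (∀ k, u k ∈ S) ∧
        ∑ k, w k * ‖u k - dbar k‖ ^ p ≤ ε ^ p ∧
        y = ((∑ k, w k * g (u k) : ℝ) : EReal)} ≤
      sSup {y : EReal | ∃ v : Fin N → EuclideanSpace ℝ (Fin m),
        (1 / (N : ℝ)) * ∑ i, ‖v i - d i‖ ^ p ≤ ε ^ p ∧
        y = (((1 / (N : ℝ)) * ∑ i, g (v i) : ℝ) : EReal)} +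
      ((L / 2 * DK : ℝ) : EReal) :=
  stmt_1_general d C hCne hCdisj hCcover dbar hdbar w hw S p ε DK hDK g L hdiff hlip
end

section
/- Fix an integer N ≥ 1, data points d_1, …, d_N in ℝ^m, a partition of {1, …, N} into K nonempty clusters with centroids d̄_k and weights w_k = |C_k|/N, a nonempty convex set S ⊆ ℝ^m containing all d_i, a real p ≥ 1, ε > 0, and a nonempty set X. Let D(K) = (1/N) ∑_{k=1}^K ∑_{i∈C_k} ‖d_i − d̄_k‖₂². Suppose g : ℝ^m × X → ℝ is such that for every x ∈ X, u ↦ g(u, x) is concave and differentiable with ‖∇_u g(v, x) − ∇_u g(u, x)‖₂ ≤ L‖u − v‖₂ for all u, v. For x ∈ X define ḡ^N(x) = sup{ (1/N) ∑_i g(v_i, x) : v_i ∈ S, (1/N) ∑_i ‖v_i − d_i‖₂^p ≤ ε^p }, ḡ^{N*}(x) the same supremum without the constraints v_i ∈ S, and ḡ^K(x) = sup{ ∑_k w_k g(u_k, x) : u_k ∈ S, ∑_k w_k ‖u_k − d̄_k‖₂^p ≤ ε^p }. If Δ ∈ ℝ satisfies ḡ^{N*}(x) − ḡ^N(x) ≤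 Δ for all x ∈ X, then inf_{x∈X} ḡ^K(x) ≤ inf_{x∈X} ḡ^N(x) + (L/2) D(K) + Δ. -/
/-!
Given cluster points `u k` feasible for `ḡ^K`, move every data point of cluster `k` by the same
vector: `v i = u k + (d i - dbar k)`. Then `v i - d i = u k - dbar k`, so `v` has the same
transport cost as `u` and is feasible for `ḡ^{N*}` (the `v i` may leave `S`; `Δ` pays for that).
A Lipschitz gradient gives `g (v i) ≥ g (u k) + ⟪∇g (u k), d i - dbar k⟫ - L/2 ‖d i - dbar k‖²`,
and the linear terms cancel over each cluster because `dbar k` is its centroid. Averaging yields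
`ḡ^K ≤ ḡ^{N*} + (L/2) D(K) ≤ ḡ^N + (L/2) D(K) + Δ`.
-/

open Finset

theorem Finset.exists_eq_filter_of_pairwise_disjoint {ι κ : Type*} [Fintype ι] [DecidableEq κ]
    {C : κ → Finset ι} (hdisj : ∀ k l, k ≠ l → Disjoint (C k) (C l))
    (hcover : ∀ i, ∃ k, i ∈ C k) : ∃ a : ι → κ, C = fun k => ({i | a i = k} : Finset ι) := by
  choose a ha using hcover
  refine ⟨a, funext fun k => ext fun i => ?_⟩
  simp only [mem_filter, mem_univ, true_and]
  refine ⟨fun hi => ?_, fun hik => hik ▸ ha i⟩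
  by_contra hne
  exact disjoint_left.1 (hdisj _ _ hne) (ha i) hi

theorem Finset.sum_sub_inv_card_smul_sum {ι E : Type*} [AddCommGroup E] [Module ℝ E]
    (s : Finset ι) (d : ι → E) : ∑ i ∈ s, (d i - (#s : ℝ)⁻¹ • ∑ j ∈ s, d j) = 0 := by
  rcases s.eq_empty_or_nonempty with rfl | hs
  · simp
  · rw [sum_sub_distrib, sum_const, ← Nat.cast_smul_eq_nsmul ℝ, smul_smul,
      mul_inv_cancel₀ (by exact_mod_cast hs.card_ne_zero), one_smul, sub_self]

theorem EReal.iInf_le_iInf_add_coe {ι : Type*} {f g : ι → EReal} {c : ℝ}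
    (h : ∀ i, f i ≤ g i + c) : ⨅ i, f i ≤ (⨅ i, g i) + c := by
  rw [← EReal.sub_le_iff_le_add (.inl (EReal.coe_ne_bot c)) (.inl (EReal.coe_ne_top c))]
  refine le_iInf fun i => ?_
  rw [EReal.sub_le_iff_le_add (.inl (EReal.coe_ne_bot c)) (.inl (EReal.coe_ne_top c))]
  exact (iInf_le f i).trans (h i)

theorem Finset.sum_fiberwise_apply {ι κ M : Type*} [Fintype κ] [DecidableEq κ] [AddCommMonoid M]
    (s : Finset ι) (g : ι → κ) (F : κ → ι → M) :
    ∑ j, ∑ i ∈ s with g i = j, F j i = ∑ i ∈ s, F (g i) i := by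
  rw [← sum_fiberwise s g]
  exact sum_congr rfl fun j _ => sum_congr rfl fun i hi => by rw [(mem_filter.1 hi).2]

theorem sum_card_filter_div_mul {ι κ : Type*} [Fintype ι] [Fintype κ] [DecidableEq κ]
    (a : ι → κ) (n : ℝ) (F : κ → ℝ) :
    ∑ k, (#{i | a i = k} : ℝ) / n * F k = 1 / n * ∑ i, F (a i) := by
  rw [← sum_fiberwise' univ a F, mul_sum]
  exact sum_congr rfl fun k _ => by rw [sum_const, nsmul_eq_mul]; ring

section LipschitzGradient

open scoped RealInnerProductSpace

variable {E : Type*} [NormedAddCommGroup E] [InnerProductSpace ℝ E] [CompleteSpace E]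

theorem Differentiable.hasDerivAt_apply_add_smul {f : E → ℝ} (hf : Differentiable ℝ f) (u δ : E)
    (t : ℝ) :
    HasDerivAt (fun s : ℝ => f (u + s • δ)) ⟪gradient f (u + t • δ), δ⟫ t := by
  have hline : HasDerivAt (fun s : ℝ => u + s • δ) δ t := by
    simpa using ((hasDerivAt_id t).smul_const δ).const_add u
  have := (hasGradientAt_iff_hasFDerivAt.1 (hf (u + t • δ)).hasGradientAt).comp_hasDerivAt t hline
  rwa [InnerProductSpace.toDual_apply_apply] at this

theorem add_inner_gradient_sub_sub_le {f : E → ℝ} (hf : Differentiable ℝ f) {L : ℝ}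
    (hL : ∀ u v, ‖gradient f v - gradient f u‖ ≤ L * ‖u - v‖) (u v : E) :
    f u + ⟪gradient f u, v - u⟫ - L / 2 * ‖v - u‖ ^ 2 ≤ f v := by
  set δ := v - u
  -- `ψ 0 ≤ ψ 1` is the claim; `ψ' ≥ 0` on `[0, ∞)` by Cauchy–Schwarz and the Lipschitz bound.
  set ψ : ℝ → ℝ := fun t => f (u + t • δ) - t * ⟪gradient f u, δ⟫ + L / 2 * t ^ 2 * ‖δ‖ ^ 2
  have hψ (t : ℝ) : HasDerivAt ψ
      (⟪gradient f (u + t • δ), δ⟫ - ⟪gradient f u, δ⟫ + L * t * ‖δ‖ ^ 2) t := by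
    refine (((hf.hasDerivAt_apply_add_smul u δ t).sub
      ((hasDerivAt_id t).mul_const _)).add
        (((hasDerivAt_pow 2 t).const_mul (L / 2)).mul_const (‖δ‖ ^ 2))).congr_deriv ?_
    simp only [Nat.cast_ofNat]; ring
  have hψ' : ∀ t ∈ interior (Set.Ici (0 : ℝ)),
      0 ≤ ⟪gradient f (u + t • δ), δ⟫ - ⟪gradient f u, δ⟫ + L * t * ‖δ‖ ^ 2 := by
    intro t ht
    rw [interior_Ici, Set.mem_Ioi] at ht
    have h1 : ‖gradient f (u + t • δ) - gradient f u‖ ≤ L * (t * ‖δ‖) := by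
      simpa [norm_smul, abs_of_pos ht] using hL u (u + t • δ)
    have h2 := abs_real_inner_le_norm (gradient f (u + t • δ) - gradient f u) δ
    rw [inner_sub_left] at h2
    nlinarith [neg_abs_le (⟪gradient f (u + t • δ), δ⟫ - ⟪gradient f u, δ⟫), norm_nonneg δ]
  have hmono := monotoneOn_of_hasDerivWithinAt_nonneg (convex_Ici 0)
    (fun t _ => (hψ t).continuousAt.continuousWithinAt) (fun t _ => (hψ t).hasDerivWithinAt) hψ'
  have := hmono Set.self_mem_Ici (zero_le_one : (0 : ℝ) ≤ 1) zero_le_one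
  simp only [ψ, zero_smul, add_zero, one_smul, δ, add_sub_cancel] at this
  linarith

variable {f : E → ℝ} {L : ℝ}

theorem card_mul_le_sum_add_sum_norm_sq_of_sum_sub_eq_zero (hf : Differentiable ℝ f)
    (hL : ∀ u v, ‖gradient f v - gradient f u‖ ≤ L * ‖u - v‖) {ι : Type*} (s : Finset ι)
    (d : ι → E) {c : E} (hc : ∑ i ∈ s, (d i - c) = 0) (u : E) :
    #s * f u ≤ ∑ i ∈ s, f (u + (d i - c)) + L / 2 * ∑ i ∈ s, ‖d i - c‖ ^ 2 := by
  have h := sum_le_sum fun i (_ : i ∈ s) =>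
    add_inner_gradient_sub_sub_le hf hL u (u + (d i - c))
  simp only [add_sub_cancel_left, sum_sub_distrib, sum_add_distrib,
    ← inner_sum, hc, inner_zero_right, add_zero, sum_const, nsmul_eq_mul,
    ← mul_sum] at h
  linarith

theorem sum_card_mul_le_sum_add_sum_norm_sq (hf : Differentiable ℝ f)
    (hL : ∀ u v, ‖gradient f v - gradient f u‖ ≤ L * ‖u - v‖) {ι κ : Type*} [Fintype ι]
    [Fintype κ] [DecidableEq κ] (a : ι → κ) (d : ι → E) (c : κ → E)
    (hc : ∀ k, ∑ i with a i = k, (d i - c k) = 0) (u : κ → E) :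
    ∑ k, #{i | a i = k} * f (u k) ≤
      ∑ i, f (u (a i) + (d i - c (a i))) + L / 2 * ∑ k, ∑ i with a i = k, ‖d i - c k‖ ^ 2 := by
  have h := sum_le_sum fun k (_ : k ∈ univ) =>
    card_mul_le_sum_add_sum_norm_sq_of_sum_sub_eq_zero hf hL _ d (hc k) (u k)
  rwa [sum_add_distrib, ← mul_sum, sum_fiberwise_apply] at h

theorem sum_card_filter_div_mul_le (hf : Differentiable ℝ f)
    (hL : ∀ u v, ‖gradient f v - gradient f u‖ ≤ L * ‖u - v‖) {ι κ : Type*} [Fintype ι]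
    [Fintype κ] [DecidableEq κ] (a : ι → κ) (d : ι → E) (c : κ → E)
    (hc : ∀ k, ∑ i with a i = k, (d i - c k) = 0) (u : κ → E) (n : ℕ) :
    ∑ k, (#{i | a i = k} : ℝ) / n * f (u k) ≤ 1 / (n : ℝ) * ∑ i, f (u (a i) + (d i - c (a i)))
      + L / 2 * (1 / (n : ℝ) * ∑ k, ∑ i with a i = k, ‖d i - c k‖ ^ 2) := by
  calc _ = 1 / (n : ℝ) * ∑ k, #{i | a i = k} * f (u k) := by
        rw [mul_sum]; exact sum_congr rfl fun k _ => by ring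
    _ ≤ 1 / (n : ℝ) * (∑ i, f (u (a i) + (d i - c (a i)))
          + L / 2 * ∑ k, ∑ i with a i = k, ‖d i - c k‖ ^ 2) := by
        gcongr; exact sum_card_mul_le_sum_add_sum_norm_sq hf hL a d c hc u
    _ = _ := by ring

end LipschitzGradient

theorem stmt_3_general {m N K : ℕ}
    (d : Fin N → EuclideanSpace ℝ (Fin m))
    (C : Fin K → Finset (Fin N))
    (hCdisj : ∀ k l, k ≠ l → Disjoint (C k) (C l))
    (hCcover : ∀ i, ∃ k, i ∈ C k)
    (dbar : Fin K → EuclideanSpace ℝ (Fin m))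
    (hdbar : ∀ k, dbar k = ((C k).card : ℝ)⁻¹ • ∑ i ∈ C k, d i)
    (w : Fin K → ℝ) (hw : ∀ k, w k = ((C k).card : ℝ) / N)
    (S : Set (EuclideanSpace ℝ (Fin m)))
    (p : ℝ) (ε : ℝ)
    (X : Type*)
    (g : EuclideanSpace ℝ (Fin m) → X → ℝ) (L : ℝ)
    (hdiff : ∀ x, Differentiable ℝ (fun u => g u x))
    (hlip : ∀ x u v,
      ‖gradient (fun u' => g u' x) v - gradient (fun u' => g u' x) u‖ ≤ L * ‖u - v‖)
    (DK : ℝ) (hDK : DK = (1 / (N : ℝ)) * ∑ k, ∑ i ∈ C k, ‖d i - dbar k‖ ^ 2)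
    (gN gNstar gK : X → EReal)
    (hgNstar : ∀ x, gNstar x = sSup {y : EReal | ∃ v : Fin N → EuclideanSpace ℝ (Fin m),
        (1 / (N : ℝ)) * ∑ i, ‖v i - d i‖ ^ p ≤ ε ^ p ∧
        y = (((1 / (N : ℝ)) * ∑ i, g (v i) x : ℝ) : EReal)})
    (hgK : ∀ x, gK x = sSup {y : EReal | ∃ u : Fin K → EuclideanSpace ℝ (Fin m),
        (∀ k, u k ∈ S) ∧
        ∑ k, w k * ‖u k - dbar k‖ ^ p ≤ ε ^ p ∧
        y = ((∑ k, w k * g (u k) x : ℝ) : EReal)})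
    (Δ : ℝ) (hΔ : ∀ x, gNstar x ≤ gN x + (Δ : EReal)) :
    (⨅ x, gK x) ≤ (⨅ x, gN x) + ((L / 2 * DK + Δ : ℝ) : EReal) := by
  obtain ⟨a, rfl⟩ := exists_eq_filter_of_pairwise_disjoint hCdisj hCcover
  obtain rfl : w = fun k => (#{i | a i = k} : ℝ) / N := funext hw
  have hcentroid (k : Fin K) : ∑ i with a i = k, (d i - dbar k) = 0 := by
    rw [hdbar k]; exact sum_sub_inv_card_smul_sum _ _
  refine EReal.iInf_le_iInf_add_coe fun x => ?_
  rw [hgK x]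
  refine sSup_le ?_
  rintro _ ⟨u, -, hu, rfl⟩
  set v := fun i => u (a i) + (d i - dbar (a i))
  have hv : (((1 / (N : ℝ)) * ∑ i, g (v i) x : ℝ) : EReal) ≤ gNstar x := by
    have hvd (i : Fin N) : v i - d i = u (a i) - dbar (a i) := by simp only [v]; abel
    rw [hgNstar x]
    refine le_sSup ⟨v, ?_, rfl⟩
    simpa only [hvd, sum_card_filter_div_mul] using hu
  have hobj := sum_card_filter_div_mul_le (hdiff x) (hlip x) a d dbar hcentroid u N
  rw [← hDK] at hobj
  calc ((∑ k, (#{i | a i = k} : ℝ) / N * g (u k) x : ℝ) : EReal)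
      ≤ (((1 / (N : ℝ)) * ∑ i, g (v i) x : ℝ) : EReal) + ((L / 2 * DK : ℝ) : EReal) := by
        exact_mod_cast hobj
    _ ≤ gN x + Δ + ((L / 2 * DK : ℝ) : EReal) := by gcongr; exact hv.trans (hΔ x)
    _ = gN x + ((L / 2 * DK + Δ : ℝ) : EReal) := by
        rw [add_assoc, ← EReal.coe_add, add_comm Δ]

/-- bound on the increase of the optimal value of the MRO problem
with uncertain objective caused by clustering:
`inf_x ḡ^K(x) ≤ inf_x ḡ^N(x) + (L/2) D(K) + Δ`. -/
theorem stmt_3 {m N K : ℕ} (hN : 1 ≤ N) (hK : 1 ≤ K)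
    (d : Fin N → EuclideanSpace ℝ (Fin m))
    (C : Fin K → Finset (Fin N))
    (hCne : ∀ k, (C k).Nonempty)
    (hCdisj : ∀ k l, k ≠ l → Disjoint (C k) (C l))
    (hCcover : ∀ i, ∃ k, i ∈ C k)
    (dbar : Fin K → EuclideanSpace ℝ (Fin m))
    (hdbar : ∀ k, dbar k = ((C k).card : ℝ)⁻¹ • ∑ i ∈ C k, d i)
    (w : Fin K → ℝ) (hw : ∀ k, w k = ((C k).card : ℝ) / N)
    (S : Set (EuclideanSpace ℝ (Fin m))) (hSne : S.Nonempty)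
    (hSconv : Convex ℝ S) (hdS : ∀ i, d i ∈ S)
    (p : ℝ) (hp : 1 ≤ p) (ε : ℝ) (hε : 0 < ε)
    (X : Type*) [Nonempty X]
    (g : EuclideanSpace ℝ (Fin m) → X → ℝ) (L : ℝ)
    (hconc : ∀ x, ConcaveOn ℝ Set.univ (fun u => g u x))
    (hdiff : ∀ x, Differentiable ℝ (fun u => g u x))
    (hlip : ∀ x u v,
      ‖gradient (fun u' => g u' x) v - gradient (fun u' => g u' x) u‖ ≤ L * ‖u - v‖)
    (DK : ℝ) (hDK : DK = (1 / (N : ℝ)) * ∑ k, ∑ i ∈ C k, ‖d i - dbar k‖ ^ 2)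
    (gN gNstar gK : X → EReal)
    (hgN : ∀ x, gN x = sSup {y : EReal | ∃ v : Fin N → EuclideanSpace ℝ (Fin m),
        (∀ i, v i ∈ S) ∧
        (1 / (N : ℝ)) * ∑ i, ‖v i - d i‖ ^ p ≤ ε ^ p ∧
        y = (((1 / (N : ℝ)) * ∑ i, g (v i) x : ℝ) : EReal)})
    (hgNstar : ∀ x, gNstar x = sSup {y : EReal | ∃ v : Fin N → EuclideanSpace ℝ (Fin m),
        (1 / (N : ℝ)) * ∑ i, ‖v i - d i‖ ^ p ≤ ε ^ p ∧
        y = (((1 / (N : ℝ)) * ∑ i, g (v i) x : ℝ) : EReal)})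
    (hgK : ∀ x, gK x = sSup {y : EReal | ∃ u : Fin K → EuclideanSpace ℝ (Fin m),
        (∀ k, u k ∈ S) ∧
        ∑ k, w k * ‖u k - dbar k‖ ^ p ≤ ε ^ p ∧
        y = ((∑ k, w k * g (u k) x : ℝ) : EReal)})
    (Δ : ℝ) (hΔ : ∀ x, gNstar x ≤ gN x + (Δ : EReal)) :
    (⨅ x, gK x) ≤ (⨅ x, gN x) + ((L / 2 * DK + Δ : ℝ) : EReal) :=
  stmt_3_general d C hCdisj hCcover dbar hdbar w hw S p ε X g L hdiff hlip DK hDK gN gNstar gK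
    hgNstar hgK Δ hΔ
end

section
/- Fix an integer N ≥ 1, data points d_1, …, d_N in ℝ^m, a partition of {1, …, N} into K nonempty clusters with centroids d̄_k = (1/|C_k|) ∑_{i∈C_k} d_i and weights w_k = |C_k|/N, a real p ≥ 1, ε > 0, a norm ‖·‖ on ℝ^m, and an affine function g(u) = ⟨c, u⟩ + b with c ∈ ℝ^m and b ∈ ℝ. Then, with support set equal to all of ℝ^m, sup{ ∑_{k=1}^K w_k g(u_k) : ∑_{k=1}^K w_k ‖u_k − d̄_k‖^p ≤ ε^p } = sup{ (1/N) ∑_{i=1}^N g(v_i) : (1/N) ∑_{i=1}^N ‖v_i − d_i‖^p ≤ ε^p }; i.e., clustering makes no difference to the worst-case value of an affine constraint when the support constraint is inactive. -/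
open scoped BigOperators RealInnerProductSpace

/-!
Moving every point of cluster `k` by the same vector `u k - d̄ k` turns a clustered perturbation
into a data perturbation of equal cost, and since `g` is affine the averaged objective is unchanged.
Conversely, averaging a data perturbation over each cluster leaves the objective unchanged (again
because `g` is affine) and does not increase the cost, by the triangle inequality and Jensen's
inequality for `t ↦ t ^ p`. Hence both problems have the same set of attainable values, and in
particular the same supremum.
-/

open Finset

section Average

variable {ι E : Type*} [AddCommGroup E] [Module ℝ E]

theorem AffineMap.card_smul_map_average {F : Type*} [AddCommGroup F] [Module ℝ F]
    (f : E →ᵃ[ℝ] F) (s : Finset ι) (v : ι → E) :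
    (#s : ℝ) • f ((#s : ℝ)⁻¹ • ∑ i ∈ s, v i) = ∑ i ∈ s, f (v i) := by
  rcases s.eq_empty_or_nonempty with rfl | hs
  · simp
  have hcard : (#s : ℝ) ≠ 0 := by exact_mod_cast hs.card_pos.ne'
  have hdecomp (x : E) : f x = f.linear x + f 0 := by simpa using f.map_vadd 0 x
  simp only [hdecomp (v _), hdecomp ((#s : ℝ)⁻¹ • _), map_smul, map_sum, smul_add, smul_smul,
    mul_inv_cancel₀ hcard, one_smul, sum_add_distrib, sum_const, Nat.cast_smul_eq_nsmul]

theorem Seminorm.card_mul_rpow_map_average_le (q : Seminorm ℝ E) {p : ℝ} (hp : 1 ≤ p)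
    (s : Finset ι) (v : ι → E) :
    #s * q ((#s : ℝ)⁻¹ • ∑ i ∈ s, v i) ^ p ≤ ∑ i ∈ s, q (v i) ^ p := by
  rcases s.eq_empty_or_nonempty with rfl | hs
  · simp
  have hcard : (0 : ℝ) < #s := by exact_mod_cast hs.card_pos
  have hinv : (0 : ℝ) ≤ (#s : ℝ)⁻¹ := inv_nonneg.mpr hcard.le
  have htriangle : q ((#s : ℝ)⁻¹ • ∑ i ∈ s, v i) ≤ ∑ i ∈ s, (#s : ℝ)⁻¹ * q (v i) := by
    rw [map_smul_eq_mul, Real.norm_of_nonneg hinv, ← mul_sum]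
    exact mul_le_mul_of_nonneg_left
      (le_sum_of_subadditive q (map_zero q).le (map_add_le_add q) s v) hinv
  have hjensen : (∑ i ∈ s, (#s : ℝ)⁻¹ * q (v i)) ^ p ≤ ∑ i ∈ s, (#s : ℝ)⁻¹ * q (v i) ^ p :=
    Real.rpow_arith_mean_le_arith_mean_rpow s _ _ (fun _ _ ↦ hinv)
      (by simp [mul_inv_cancel₀ hcard.ne']) (fun i _ ↦ apply_nonneg q (v i)) hp
  calc #s * q ((#s : ℝ)⁻¹ • ∑ i ∈ s, v i) ^ p
      ≤ #s * ∑ i ∈ s, (#s : ℝ)⁻¹ * q (v i) ^ p := by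
        gcongr
        exact (Real.rpow_le_rpow (apply_nonneg q _) htriangle (by linarith)).trans hjensen
    _ = ∑ i ∈ s, q (v i) ^ p := by
        rw [mul_sum]
        simp only [mul_inv_cancel_left₀ hcard.ne']

end Average

section Cluster

variable {ι κ E : Type*} [Fintype ι] [DecidableEq κ] [AddCommGroup E] [Module ℝ E]

noncomputable def clusterMean (σ : ι → κ) (v : ι → E) (k : κ) : E :=
  (#{i | σ i = k} : ℝ)⁻¹ • ∑ i with σ i = k, v i

variable (σ : ι → κ)

theorem clusterMean_sub (v d : ι → E) :
    clusterMean σ (v - d) = clusterMean σ v - clusterMean σ d := by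
  funext k
  simp only [clusterMean, Pi.sub_apply, sum_sub_distrib, smul_sub]

theorem clusterMean_comp_add (hσ : Function.Surjective σ) (u : κ → E) (x : ι → E) :
    clusterMean σ (fun i ↦ u (σ i) + x i) = u + clusterMean σ x := by
  funext k
  obtain ⟨i, hi⟩ := hσ k
  have hcard : (#{j | σ j = k} : ℝ) ≠ 0 := by exact_mod_cast (card_pos.mpr ⟨i, by simpa⟩).ne'
  have hconst : ∑ j with σ j = k, u (σ j) = (#{j | σ j = k} : ℝ) • u k := by
    rw [sum_congr rfl fun j hj ↦ congrArg u (mem_filter.mp hj).2, sum_const, Nat.cast_smul_eq_nsmul]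
  simp only [clusterMean, sum_add_distrib, hconst, smul_add, smul_smul, inv_mul_cancel₀ hcard,
    one_smul, Pi.add_apply]

variable [Fintype κ]

theorem sum_comp_eq_sum_card_mul (F : κ → ℝ) : ∑ i, F (σ i) = ∑ k, #{i | σ i = k} * F k := by
  simp only [← sum_fiberwise' univ σ F, sum_const, nsmul_eq_mul]

theorem sum_map_eq_sum_card_mul_clusterMean (f : E →ᵃ[ℝ] ℝ) (v : ι → E) :
    ∑ i, f (v i) = ∑ k, #{i | σ i = k} * f (clusterMean σ v k) := by
  rw [← sum_fiberwise univ σ]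
  exact sum_congr rfl fun k _ ↦ (f.card_smul_map_average _ v).symm

theorem sum_card_mul_rpow_clusterMean_le (q : Seminorm ℝ E) {p : ℝ} (hp : 1 ≤ p) (v : ι → E) :
    ∑ k, #{i | σ i = k} * q (clusterMean σ v k) ^ p ≤ ∑ i, q (v i) ^ p := by
  rw [← sum_fiberwise univ σ]
  exact sum_le_sum fun k _ ↦ q.card_mul_rpow_map_average_le hp _ v

theorem setOf_clustered_values_eq (hσ : Function.Surjective σ) (q : Seminorm ℝ E) {p : ℝ}
    (hp : 1 ≤ p) (f : E →ᵃ[ℝ] ℝ) (d : ι → E) {n : ℝ} (hn : 0 ≤ n) (r : ℝ) :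
    {t : ℝ | ∃ u : κ → E, ∑ k, (#{i | σ i = k} : ℝ) / n * q (u k - clusterMean σ d k) ^ p ≤ r ∧
        t = ∑ k, (#{i | σ i = k} : ℝ) / n * f (u k)} =
      {t : ℝ | ∃ v : ι → E, 1 / n * ∑ i, q (v i - d i) ^ p ≤ r ∧
        t = 1 / n * ∑ i, f (v i)} := by
  have hweights (X : κ → ℝ) :
      ∑ k, (#{i | σ i = k} : ℝ) / n * X k = 1 / n * ∑ k, #{i | σ i = k} * X k := by
    rw [mul_sum]
    exact sum_congr rfl fun k _ ↦ by ring
  simp only [hweights]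
  ext t
  constructor
  · rintro ⟨u, hu, rfl⟩
    refine ⟨fun i ↦ (u - clusterMean σ d) (σ i) + d i, ?_, ?_⟩
    · simp only [add_sub_cancel_right]
      rwa [sum_comp_eq_sum_card_mul σ fun k ↦ q ((u - clusterMean σ d) k) ^ p]
    · rw [sum_map_eq_sum_card_mul_clusterMean σ f, clusterMean_comp_add σ hσ, sub_add_cancel]
  · rintro ⟨v, hv, rfl⟩
    refine ⟨clusterMean σ v, ?_, by rw [sum_map_eq_sum_card_mul_clusterMean σ f]⟩
    calc 1 / n * ∑ k, #{i | σ i = k} * q (clusterMean σ v k - clusterMean σ d k) ^ p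
        = 1 / n * ∑ k, #{i | σ i = k} * q (clusterMean σ (v - d) k) ^ p := by
          rw [clusterMean_sub]; rfl
      _ ≤ 1 / n * ∑ i, q ((v - d) i) ^ p := by
          gcongr
          exact sum_card_mul_rpow_clusterMean_le σ q hp _
      _ ≤ r := hv

end Cluster

theorem exists_eq_fibers_of_disjoint_of_cover {ι κ : Type*} [Fintype ι] [DecidableEq κ]
    {C : κ → Finset ι} (hdisj : ∀ k l, k ≠ l → Disjoint (C k) (C l))
    (hcover : ∀ i, ∃ k, i ∈ C k) :
    ∃ σ : ι → κ, C = fun k ↦ ({i | σ i = k} : Finset ι) := by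
  choose σ hσ using hcover
  refine ⟨σ, funext fun k ↦ ext fun i ↦ ?_⟩
  simp only [mem_filter, mem_univ, true_and]
  exact ⟨fun hi ↦ by_contra fun hne ↦ disjoint_left.mp (hdisj _ _ hne) (hσ i) hi,
    fun h ↦ h ▸ hσ i⟩

theorem stmt_4_general {m N K : ℕ}
    (d : Fin N → EuclideanSpace ℝ (Fin m))
    (C : Fin K → Finset (Fin N))
    (hCne : ∀ k, (C k).Nonempty)
    (hCdisj : ∀ k l, k ≠ l → Disjoint (C k) (C l))
    (hCcover : ∀ i, ∃ k, i ∈ C k)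
    (dbar : Fin K → EuclideanSpace ℝ (Fin m))
    (hdbar : ∀ k, dbar k = ((C k).card : ℝ)⁻¹ • ∑ i ∈ C k, d i)
    (w : Fin K → ℝ) (hw : ∀ k, w k = ((C k).card : ℝ) / N)
    (p : ℝ) (hp : 1 ≤ p) (ε : ℝ)
    (nrm : EuclideanSpace ℝ (Fin m) → ℝ)
    (hnrm_add : ∀ x y, nrm (x + y) ≤ nrm x + nrm y)
    (hnrm_smul : ∀ (c : ℝ) x, nrm (c • x) = |c| * nrm x)
    (c : EuclideanSpace ℝ (Fin m)) (b : ℝ)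
    (g : EuclideanSpace ℝ (Fin m) → ℝ) (hg : ∀ u, g u = ⟪c, u⟫ + b) :
    sSup {t : ℝ | ∃ u : Fin K → EuclideanSpace ℝ (Fin m),
        ∑ k, w k * nrm (u k - dbar k) ^ p ≤ ε ^ p ∧
        t = ∑ k, w k * g (u k)} =
      sSup {t : ℝ | ∃ v : Fin N → EuclideanSpace ℝ (Fin m),
        (1 / (N : ℝ)) * ∑ i, nrm (v i - d i) ^ p ≤ ε ^ p ∧
        t = (1 / (N : ℝ)) * ∑ i, g (v i)} := by
  obtain ⟨σ, rfl⟩ := exists_eq_fibers_of_disjoint_of_cover hCdisj hCcover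
  have hσ : Function.Surjective σ := fun k ↦ by
    obtain ⟨i, hi⟩ := hCne k
    exact ⟨i, (mem_filter.mp hi).2⟩
  obtain rfl : dbar = clusterMean σ d := funext hdbar
  obtain rfl : w = fun k ↦ (#{i | σ i = k} : ℝ) / N := funext hw
  let q : Seminorm ℝ (EuclideanSpace ℝ (Fin m)) :=
    Seminorm.of nrm hnrm_add fun a x ↦ by rw [hnrm_smul, Real.norm_eq_abs]
  let f : EuclideanSpace ℝ (Fin m) →ᵃ[ℝ] ℝ :=
    { toFun := g
      linear := innerₛₗ ℝ c
      map_vadd' := fun x v ↦ by simp [hg, inner_add_right, add_assoc] }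
  exact congrArg sSup (setOf_clustered_values_eq σ hσ q hp f d N.cast_nonneg (ε ^ p))

/-- for an affine constraint `g(u) = ⟨c, u⟩ + b` and unbounded support,
clustering makes no difference to the worst-case value. -/
theorem stmt_4 {m N K : ℕ} (hN : 1 ≤ N) (hK : 1 ≤ K)
    (d : Fin N → EuclideanSpace ℝ (Fin m))
    (C : Fin K → Finset (Fin N))
    (hCne : ∀ k, (C k).Nonempty)
    (hCdisj : ∀ k l, k ≠ l → Disjoint (C k) (C l))
    (hCcover : ∀ i, ∃ k, i ∈ C k)
    (dbar : Fin K → EuclideanSpace ℝ (Fin m))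
    (hdbar : ∀ k, dbar k = ((C k).card : ℝ)⁻¹ • ∑ i ∈ C k, d i)
    (w : Fin K → ℝ) (hw : ∀ k, w k = ((C k).card : ℝ) / N)
    (p : ℝ) (hp : 1 ≤ p) (ε : ℝ) (hε : 0 < ε)
    (nrm : EuclideanSpace ℝ (Fin m) → ℝ)
    (hnrm_add : ∀ x y, nrm (x + y) ≤ nrm x + nrm y)
    (hnrm_smul : ∀ (c : ℝ) x, nrm (c • x) = |c| * nrm x)
    (hnrm_def : ∀ x, nrm x = 0 → x = 0)
    (c : EuclideanSpace ℝ (Fin m)) (b : ℝ)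
    (g : EuclideanSpace ℝ (Fin m) → ℝ) (hg : ∀ u, g u = ⟪c, u⟫ + b) :
    sSup {t : ℝ | ∃ u : Fin K → EuclideanSpace ℝ (Fin m),
        ∑ k, w k * nrm (u k - dbar k) ^ p ≤ ε ^ p ∧
        t = ∑ k, w k * g (u k)} =
      sSup {t : ℝ | ∃ v : Fin N → EuclideanSpace ℝ (Fin m),
        (1 / (N : ℝ)) * ∑ i, nrm (v i - d i) ^ p ≤ ε ^ p ∧
        t = (1 / (N : ℝ)) * ∑ i, g (v i)} :=
  stmt_4_general d C hCne hCdisj hCcover dbar hdbar w hw p hp ε nrm hnrm_add hnrm_smul c b g hg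
end

section
/- Let ‖·‖ be a norm on ℝ^m with dual norm ‖z‖_* = sup{⟨z, u⟩ : ‖u‖ ≤ 1}. Fix an integer K ≥ 1, points d̄_1, …, d̄_K ∈ ℝ^m, positive weights w_1, …, w_K with ∑_{k=1}^K w_k = 1, a real p ≥ 1, ε ≥ 0, and z ∈ ℝ^m. Then sup{ ∑_{k=1}^K w_k ⟨z, v_k⟩ : v_1, …, v_K ∈ ℝ^m, ∑_{k=1}^K w_k ‖v_k − d̄_k‖^p ≤ ε^p } = ⟨z, ∑_{k=1}^K w_k d̄_k⟩ + ε ‖z‖_*. -/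
open scoped RealInnerProductSpace
open Finset

/-!
Write `v_k = d̄_k + Δ_k`: the objective becomes `⟪z, ∑ w_k d̄_k⟫ + ∑ w_k ⟪z, Δ_k⟫`. The dual-norm
inequality and Jensen's inequality `(∑ w_k ‖Δ_k‖)^p ≤ ∑ w_k ‖Δ_k‖^p ≤ ε^p` bound the second sum by
`ε ‖z‖_*`, and the common shift `Δ_k = ε u`, `‖u‖ ≤ 1`, attains `ε ⟪z, u⟫`, whose supremum is
`ε ‖z‖_*`. The dual norm is finite because all norms on a finite-dimensional space are equivalent.
-/

/-- A copy of `E` carrying no norm, so that a second norm can be put on it. -/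
def Renormed (E : Type*) : Type _ := E

instance {E : Type*} [AddCommGroup E] : AddCommGroup (Renormed E) := ‹AddCommGroup E›

instance {E : Type*} [AddCommGroup E] [Module ℝ E] : Module ℝ (Renormed E) := ‹Module ℝ E›

instance {E : Type*} [AddCommGroup E] [Module ℝ E] [FiniteDimensional ℝ E] :
    FiniteDimensional ℝ (Renormed E) :=
  ‹FiniteDimensional ℝ E›

namespace Seminorm

lemma exists_norm_le_mul {E : Type*} [NormedAddCommGroup E] [NormedSpace ℝ E]
    [FiniteDimensional ℝ E] (q : Seminorm ℝ E) (hq : ∀ x, q x = 0 → x = 0) :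
    ∃ C, 0 < C ∧ ∀ x, ‖x‖ ≤ C * q x := by
  let : NormedAddCommGroup (Renormed E) := AddGroupNorm.toNormedAddCommGroup
    { q.toAddGroupSeminorm with eq_zero_of_map_eq_zero' := hq }
  let : NormedSpace ℝ (Renormed E) := ⟨fun c x => (map_smul_eq_mul q c x).le⟩
  let toE : Renormed E →ₗ[ℝ] E := LinearMap.id
  exact toE.toContinuousLinearMap.bound

variable {E : Type*} [NormedAddCommGroup E] [InnerProductSpace ℝ E] (q : Seminorm ℝ E) (z : E)

lemma bddAbove_inner_of_le_one [FiniteDimensional ℝ E] (hq : ∀ x, q x = 0 → x = 0) :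
    BddAbove {t : ℝ | ∃ u, q u ≤ 1 ∧ t = ⟪z, u⟫} := by
  obtain ⟨C, hC, hle⟩ := q.exists_norm_le_mul hq
  refine ⟨‖z‖ * C, ?_⟩
  rintro _ ⟨u, hu, rfl⟩
  calc ⟪z, u⟫ ≤ ‖z‖ * ‖u‖ := real_inner_le_norm z u
    _ ≤ ‖z‖ * (C * q u) := by gcongr; exact hle u
    _ ≤ ‖z‖ * (C * 1) := by gcongr
    _ = ‖z‖ * C := by rw [mul_one]

lemma inner_le_mul_of_forall_le {s : ℝ} (hs : ∀ u, q u ≤ 1 → ⟪z, u⟫ ≤ s) (u : E) :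
    ⟪z, u⟫ ≤ s * q u := by
  rcases (apply_nonneg q u).eq_or_lt with hu | hu
  · -- every multiple of `u` lies in the unit ball of `q`
    rw [← hu, mul_zero]
    by_contra! h
    have := hs (((s + 1) / ⟪z, u⟫) • u) (by rw [map_smul_eq_mul, ← hu, mul_zero]; exact zero_le_one)
    rw [real_inner_smul_right, div_mul_cancel₀ _ h.ne'] at this
    linarith
  · have := hs ((q u)⁻¹ • u) (by
      rw [map_smul_eq_mul, norm_inv, Real.norm_of_nonneg hu.le, inv_mul_cancel₀ hu.ne'])
    rw [real_inner_smul_right, inv_mul_le_iff₀ hu] at this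
    linarith

end Seminorm

lemma sum_mul_le_of_sum_mul_rpow_le {ι : Type*} (s : Finset ι) {w x : ι → ℝ} {p ε : ℝ}
    (hw : ∀ i ∈ s, 0 ≤ w i) (hw' : ∑ i ∈ s, w i = 1) (hx : ∀ i ∈ s, 0 ≤ x i) (hp : 1 ≤ p)
    (hε : 0 ≤ ε) (h : ∑ i ∈ s, w i * x i ^ p ≤ ε ^ p) : ∑ i ∈ s, w i * x i ≤ ε := by
  have hmean : 0 ≤ ∑ i ∈ s, w i * x i := sum_nonneg fun i hi => mul_nonneg (hw i hi) (hx i hi)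
  refine (Real.rpow_le_rpow_iff hmean hε (by linarith : 0 < p)).1 ?_
  exact (Real.rpow_arith_mean_le_arith_mean_rpow s w x hw hw' hx hp).trans h

section MeanRobust

variable {ι E : Type*} [Fintype ι] [NormedAddCommGroup E] [InnerProductSpace ℝ E]
  (q : Seminorm ℝ E) (d : ι → E) {w : ι → ℝ} (hw' : ∑ k, w k = 1) {p ε : ℝ} (hp : 1 ≤ p)
  (hε : 0 ≤ ε) (z : E)
include hw' hp hε

lemma sum_inner_le_of_sum_rpow_le (hw : ∀ k, 0 ≤ w k) {s : ℝ}
    (hs : ∀ u, q u ≤ 1 → ⟪z, u⟫ ≤ s) (v : ι → E)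
    (hv : ∑ k, w k * q (v k - d k) ^ p ≤ ε ^ p) :
    ∑ k, w k * ⟪z, v k⟫ ≤ ⟪z, ∑ k, w k • d k⟫ + ε * s := by
  have hs0 : 0 ≤ s := by simpa using hs 0 (by simp)
  have hdev : ∑ k, w k * q (v k - d k) ≤ ε :=
    sum_mul_le_of_sum_mul_rpow_le univ (fun k _ => hw k) hw' (fun k _ => apply_nonneg q _) hp hε hv
  calc ∑ k, w k * ⟪z, v k⟫ = ⟪z, ∑ k, w k • d k⟫ + ∑ k, w k * ⟪z, v k - d k⟫ := by
        simp only [inner_sum, real_inner_smul_right, inner_sub_right, ← sum_add_distrib]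
        congr! 1 with k; ring
    _ ≤ ⟪z, ∑ k, w k • d k⟫ + ∑ k, w k * (s * q (v k - d k)) := by
        gcongr with k
        · exact hw k
        · exact q.inner_le_mul_of_forall_le z hs _
    _ = ⟪z, ∑ k, w k • d k⟫ + s * ∑ k, w k * q (v k - d k) := by
        simp only [mul_sum, mul_left_comm]
    _ ≤ ⟪z, ∑ k, w k • d k⟫ + ε * s := by nlinarith

lemma mem_of_le_one {u : E} (hu : q u ≤ 1) :
    ⟪z, ∑ k, w k • d k⟫ + ε * ⟪z, u⟫ ∈ {t | ∃ v : ι → E,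
      ∑ k, w k * q (v k - d k) ^ p ≤ ε ^ p ∧ t = ∑ k, w k * ⟪z, v k⟫} := by
  refine ⟨fun k => d k + ε • u, ?_, ?_⟩
  · have hdev : q (ε • u) ≤ ε := by
      rw [map_smul_eq_mul, Real.norm_of_nonneg hε]; exact mul_le_of_le_one_right hε hu
    simp only [add_sub_cancel_left, ← sum_mul, hw', one_mul]
    exact Real.rpow_le_rpow (apply_nonneg q _) hdev (by linarith)
  · simp only [inner_add_right, inner_sum, real_inner_smul_right, mul_add, sum_add_distrib,
      ← sum_mul, hw', one_mul]

theorem isLUB_sum_inner (hw : ∀ k, 0 ≤ w k) {s : ℝ}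
    (hs : IsLUB {t | ∃ u, q u ≤ 1 ∧ t = ⟪z, u⟫} s) :
    IsLUB {t | ∃ v : ι → E, ∑ k, w k * q (v k - d k) ^ p ≤ ε ^ p ∧ t = ∑ k, w k * ⟪z, v k⟫}
      (⟪z, ∑ k, w k • d k⟫ + ε * s) := by
  refine ⟨?_, fun b hb => ?_⟩
  · rintro _ ⟨v, hv, rfl⟩
    exact sum_inner_le_of_sum_rpow_le q d hw' hp hε z hw (fun u hu => hs.1 ⟨u, hu, rfl⟩) v hv
  have hbu : ∀ u, q u ≤ 1 → ⟪z, ∑ k, w k • d k⟫ + ε * ⟪z, u⟫ ≤ b :=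
    fun u hu => hb (mem_of_le_one q d hw' hp hε z hu)
  rcases hε.eq_or_lt with rfl | hε
  · simpa using hbu 0 (by simp)
  · have : s ≤ (b - ⟪z, ∑ k, w k • d k⟫) / ε := hs.2 <| by
      rintro _ ⟨u, hu, rfl⟩
      rw [le_div_iff₀ hε]
      linarith [hbu u hu]
    rw [le_div_iff₀ hε] at this
    linarith

end MeanRobust

theorem stmt_5_general {m K : ℕ}
    (nrm : EuclideanSpace ℝ (Fin m) → ℝ)
    (hnrm_add : ∀ x y, nrm (x + y) ≤ nrm x + nrm y)
    (hnrm_smul : ∀ (c : ℝ) x, nrm (c • x) = |c| * nrm x)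
    (hnrm_def : ∀ x, nrm x = 0 → x = 0)
    (dualNrm : EuclideanSpace ℝ (Fin m) → ℝ)
    (hdualNrm : ∀ z, dualNrm z = sSup {t : ℝ | ∃ u, nrm u ≤ 1 ∧ t = ⟪z, u⟫})
    (dbar : Fin K → EuclideanSpace ℝ (Fin m))
    (w : Fin K → ℝ) (hw_pos : ∀ k, 0 < w k) (hw_sum : ∑ k, w k = 1)
    (p : ℝ) (hp : 1 ≤ p) (ε : ℝ) (hε : 0 ≤ ε)
    (z : EuclideanSpace ℝ (Fin m)) :
    sSup {t : ℝ | ∃ v : Fin K → EuclideanSpace ℝ (Fin m),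
        ∑ k, w k * nrm (v k - dbar k) ^ p ≤ ε ^ p ∧
        t = ∑ k, w k * ⟪z, v k⟫} =
      ⟪z, ∑ k, w k • dbar k⟫ + ε * dualNrm z := by
  let q : Seminorm ℝ (EuclideanSpace ℝ (Fin m)) :=
    Seminorm.of nrm hnrm_add fun c x => by rw [hnrm_smul, Real.norm_eq_abs]
  have hdual : IsLUB {t | ∃ u, q u ≤ 1 ∧ t = ⟪z, u⟫} (dualNrm z) := by
    rw [hdualNrm]
    exact isLUB_csSup ⟨0, 0, by simp, by simp⟩ (q.bddAbove_inner_of_le_one z hnrm_def)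
  exact (isLUB_sum_inner q dbar hw_sum hp hε z (fun k => (hw_pos k).le) hdual).csSup_eq
    ⟨_, mem_of_le_one q dbar hw_sum hp hε z (u := 0) (by simp)⟩

/-- explicit worst-case value of a linear function over the order-`p`
MRO uncertainty set with unbounded support:
`sup = ⟨z, ∑_k w_k d̄_k⟩ + ε ‖z‖_*`. -/
theorem stmt_5 {m K : ℕ} (hK : 1 ≤ K)
    (nrm : EuclideanSpace ℝ (Fin m) → ℝ)
    (hnrm_add : ∀ x y, nrm (x + y) ≤ nrm x + nrm y)
    (hnrm_smul : ∀ (c : ℝ) x, nrm (c • x) = |c| * nrm x)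
    (hnrm_def : ∀ x, nrm x = 0 → x = 0)
    (dualNrm : EuclideanSpace ℝ (Fin m) → ℝ)
    (hdualNrm : ∀ z, dualNrm z = sSup {t : ℝ | ∃ u, nrm u ≤ 1 ∧ t = ⟪z, u⟫})
    (dbar : Fin K → EuclideanSpace ℝ (Fin m))
    (w : Fin K → ℝ) (hw_pos : ∀ k, 0 < w k) (hw_sum : ∑ k, w k = 1)
    (p : ℝ) (hp : 1 ≤ p) (ε : ℝ) (hε : 0 ≤ ε)
    (z : EuclideanSpace ℝ (Fin m)) :
    sSup {t : ℝ | ∃ v : Fin K → EuclideanSpace ℝ (Fin m),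
        ∑ k, w k * nrm (v k - dbar k) ^ p ≤ ε ^ p ∧
        t = ∑ k, w k * ⟪z, v k⟫} =
      ⟪z, ∑ k, w k • dbar k⟫ + ε * dualNrm z :=
  stmt_5_general nrm hnrm_add hnrm_smul hnrm_def dualNrm hdualNrm dbar w hw_pos hw_sum p hp ε hε z
end

section
/- Fix an integer K ≥ 1, points d_1, …, d_K ∈ ℝ^m, a real M ≥ 1, weights w_1, …, w_K with 1/M < w_k < M for all k, a nonempty set S ⊆ ℝ^m, a norm ‖·‖ on ℝ^m, a function g : ℝ^m → ℝ, and ε > 0. For δ > 0 define g^δ(d) = sup{ g(v) : v ∈ S, ‖v − d‖ ≤ δ }, and assume each g^δ(d_k) is finite and that for each k the map δ ↦ g^δ(d_k) is continuous on (0, ∞). For p ≥ 1 define ḡ(p) = sup{ ∑_{k=1}^K w_k g(v_k) : v_k ∈ S, ∑_{k=1}^K w_k ‖v_k − d_k‖^p ≤ ε^p }. Then ḡ(p) converges to ∑_{k=1}^K w_k g^ε(d_k) as p → ∞. -/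
/-!
For `p > 0` the order-`p` uncertainty set is squeezed between two products of balls: it contains
the box `‖v_k - d_k‖ ≤ ε (1 + ∑ w)^(-1/p)`, whose weighted `p`-budget is at most
`(∑ w) / (1 + ∑ w) · ε^p`, and it lies in the box `‖v_k - d_k‖ ≤ ε w_k^(-1/p)`, since a single
term of the budget may already exhaust it. Over a box the weighted objective decouples, so its
supremum is `∑ w_k g^(r_k)(d_k)`. Both families of radii tend to `ε` as `p → ∞`, and continuity
of `δ ↦ g^δ(d_k)` at `ε` squeezes `ḡ(p)`.
-/

open Set Filter Topology
open scoped Pointwise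

theorem isLUB_finsetSum {ι G : Type*} [AddCommGroup G] [Preorder G] [AddLeftMono G]
    (s : Finset ι) {T : ι → Set G} {a : ι → G} (h : ∀ i ∈ s, IsLUB (T i) (a i)) :
    IsLUB (∑ i ∈ s, T i) (∑ i ∈ s, a i) := by
  classical
  induction s using Finset.induction_on with
  | empty => exact isLUB_singleton
  | insert i s hi ih =>
    rw [Finset.sum_insert hi, Finset.sum_insert hi]
    exact (h i (s.mem_insert_self i)).add (ih fun j hj => h j (Finset.mem_insert_of_mem hj))

theorem image_sum_univ_pi {ι X : Type*} [Fintype ι] (f : ι → X → ℝ) (B : ι → Set X) :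
    (fun v : ι → X => ∑ k, f k (v k)) '' univ.pi B = ∑ k, f k '' B k := by
  rw [← image_fintype_sum_pi, ← piMap_image_univ_pi, image_image]
  rfl

theorem isLUB_image_weightedSum_univ_pi {ι X : Type*} [Fintype ι] {w : ι → ℝ} (hw : ∀ k, 0 ≤ w k)
    (g : X → ℝ) {B : ι → Set X} {a : ι → ℝ} (hB : ∀ k, IsLUB (g '' B k) (a k)) :
    IsLUB ((fun v : ι → X => ∑ k, w k * g (v k)) '' univ.pi B) (∑ k, w k * a k) := by
  rw [image_sum_univ_pi (fun k x => w k * g x)]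
  refine isLUB_finsetSum _ fun k _ => ?_
  rw [← image_image (w k * ·) g]
  exact (hB k).mul_left (hw k)

theorem mul_rpow_neg_inv_rpow {ε c p : ℝ} (hε : 0 ≤ ε) (hc : 0 < c) (hp : p ≠ 0) :
    (ε * c ^ (-p⁻¹)) ^ p = ε ^ p / c := by
  rw [Real.mul_rpow hε (Real.rpow_nonneg hc.le _), ← Real.rpow_mul hc.le, neg_mul,
    inv_mul_cancel₀ hp, Real.rpow_neg_one, div_eq_mul_inv]

theorem tendsto_mul_rpow_neg_inv_atTop (ε : ℝ) {c : ℝ} (hc : 0 < c) :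
    Tendsto (fun p : ℝ => ε * c ^ (-p⁻¹)) atTop (𝓝 ε) := by
  have hexp : Tendsto (fun p : ℝ => -p⁻¹) atTop (𝓝 0) := by
    simpa using (tendsto_inv_atTop_zero (𝕜 := ℝ)).neg
  simpa using ((Real.continuousAt_const_rpow hc.ne').tendsto.comp hexp).const_mul ε

section MeanRobust

-- With `e k x = ‖x - d_k‖`, `mroSet w S e ε p` is the order-`p` uncertainty set and
-- `localSup S e g k δ` is `g^δ(d_k)`.
variable {ι X : Type*} [Fintype ι] (w : ι → ℝ) (S : Set X) (e : ι → X → ℝ) (g : X → ℝ)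

def mroSet (ε p : ℝ) : Set (ι → X) :=
  {v | (∀ k, v k ∈ S) ∧ ∑ k, w k * e k (v k) ^ p ≤ ε ^ p}

def boxSet (r : ι → ℝ) : Set (ι → X) :=
  univ.pi fun k => {x ∈ S | e k x ≤ r k}

noncomputable def localSup (k : ι) (δ : ℝ) : ℝ :=
  sSup (g '' {x ∈ S | e k x ≤ δ})

variable {w S e g}

theorem boxSet_subset_mroSet {ε p : ℝ} {r : ι → ℝ} (hw : ∀ k, 0 ≤ w k) (he : ∀ k x, 0 ≤ e k x)
    (hp : 0 ≤ p) (hr : ∑ k, w k * r k ^ p ≤ ε ^ p) : boxSet S e r ⊆ mroSet w S e ε p := by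
  intro v hv
  refine ⟨fun k => (hv k trivial).1, le_trans (Finset.sum_le_sum fun k _ => ?_) hr⟩
  exact mul_le_mul_of_nonneg_left
    (Real.rpow_le_rpow (he k (v k)) (hv k trivial).2 hp) (hw k)

theorem mroSet_subset_boxSet {ε p : ℝ} {r : ι → ℝ} (hw : ∀ k, 0 < w k) (he : ∀ k x, 0 ≤ e k x)
    (hp : 0 < p) (hr₀ : ∀ k, 0 ≤ r k) (hr : ∀ k, ε ^ p ≤ w k * r k ^ p) :
    mroSet w S e ε p ⊆ boxSet S e r := by
  rintro v ⟨hvS, hv⟩ k -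
  refine ⟨hvS k, ?_⟩
  have hterm : w k * e k (v k) ^ p ≤ w k * r k ^ p :=
    calc w k * e k (v k) ^ p ≤ ∑ j, w j * e j (v j) ^ p :=
          Finset.single_le_sum (f := fun j => w j * e j (v j) ^ p)
            (fun j _ => mul_nonneg (hw j).le (Real.rpow_nonneg (he j _) p)) (Finset.mem_univ k)
      _ ≤ ε ^ p := hv
      _ ≤ w k * r k ^ p := hr k
  exact (Real.rpow_le_rpow_iff (he k _) (hr₀ k) hp).1 (le_of_mul_le_mul_left hterm (hw k))

theorem isLUB_image_boxSet {r : ι → ℝ} (hw : ∀ k, 0 ≤ w k)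
    (hne : ∀ k, {x ∈ S | e k x ≤ r k}.Nonempty)
    (hbdd : ∀ k, BddAbove (g '' {x ∈ S | e k x ≤ r k})) :
    IsLUB ((fun v : ι → X => ∑ k, w k * g (v k)) '' boxSet S e r)
      (∑ k, w k * localSup S e g k (r k)) :=
  isLUB_image_weightedSum_univ_pi hw g fun k => isLUB_csSup ((hne k).image g) (hbdd k)

theorem sSup_image_mroSet_mem_Icc {ε p : ℝ} (hw : ∀ k, 0 < w k) (he : ∀ k x, 0 ≤ e k x)
    (hε : 0 < ε) (hp : 0 < p) (hne : ∀ k, ∀ δ > 0, {x ∈ S | e k x ≤ δ}.Nonempty)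
    (hbdd : ∀ k, ∀ δ > 0, BddAbove (g '' {x ∈ S | e k x ≤ δ})) :
    sSup ((fun v : ι → X => ∑ k, w k * g (v k)) '' mroSet w S e ε p) ∈
      Icc (∑ k, w k * localSup S e g k (ε * (1 + ∑ j, w j) ^ (-p⁻¹)))
        (∑ k, w k * localSup S e g k (ε * w k ^ (-p⁻¹))) := by
  set c := 1 + ∑ j, w j
  have hc : 0 < c := add_pos_of_pos_of_nonneg one_pos (Finset.sum_nonneg fun j _ => (hw j).le)
  set lo : ι → ℝ := fun _ => ε * c ^ (-p⁻¹)
  set hi : ι → ℝ := fun k => ε * w k ^ (-p⁻¹)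
  have hlo₀ : ∀ k, 0 < lo k := fun _ => by positivity
  have hhi₀ : ∀ k, 0 < hi k := fun k => mul_pos hε (Real.rpow_pos_of_pos (hw k) _)
  have hw₀ : ∀ k, 0 ≤ w k := fun k => (hw k).le
  have hlo : IsLUB _ _ := isLUB_image_boxSet hw₀ (fun k => hne k _ (hlo₀ k))
    (fun k => hbdd k _ (hlo₀ k))
  have hhi : IsLUB _ _ := isLUB_image_boxSet hw₀ (fun k => hne k _ (hhi₀ k))
    (fun k => hbdd k _ (hhi₀ k))
  have hsub_lo : boxSet S e lo ⊆ mroSet w S e ε p := by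
    refine boxSet_subset_mroSet hw₀ he hp.le ?_
    simp only [lo, mul_rpow_neg_inv_rpow hε.le hc hp.ne', ← Finset.sum_mul]
    rw [mul_div_left_comm]
    exact mul_le_of_le_one_right (by positivity) ((div_le_one hc).2 (by linarith))
  have hsub_hi : mroSet w S e ε p ⊆ boxSet S e hi :=
    mroSet_subset_boxSet hw he hp (fun k => (hhi₀ k).le) fun k => by
      rw [mul_rpow_neg_inv_rpow hε.le (hw k) hp.ne', mul_div_cancel₀ _ (hw k).ne']
  have hA : IsLUB _ _ := isLUB_csSup
    ((univ_pi_nonempty_iff.2 fun k => hne k _ (hlo₀ k)).image _ |>.mono (image_mono hsub_lo))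
    (hhi.bddAbove.mono (image_mono hsub_hi))
  exact ⟨hlo.mono hA (image_mono hsub_lo), hA.mono hhi (image_mono hsub_hi)⟩

theorem tendsto_sSup_image_mroSet {ε : ℝ} (hw : ∀ k, 0 < w k) (he : ∀ k x, 0 ≤ e k x)
    (hε : 0 < ε) (hne : ∀ k, ∀ δ > 0, {x ∈ S | e k x ≤ δ}.Nonempty)
    (hbdd : ∀ k, ∀ δ > 0, BddAbove (g '' {x ∈ S | e k x ≤ δ}))
    (hcont : ∀ k, ContinuousAt (localSup S e g k) ε) :
    Tendsto (fun p => sSup ((fun v : ι → X => ∑ k, w k * g (v k)) '' mroSet w S e ε p)) atTop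
      (𝓝 (∑ k, w k * localSup S e g k ε)) := by
  have hlim : ∀ r : ι → ℝ → ℝ, (∀ k, Tendsto (r k) atTop (𝓝 ε)) →
      Tendsto (fun p => ∑ k, w k * localSup S e g k (r k p)) atTop
        (𝓝 (∑ k, w k * localSup S e g k ε)) := fun r hr =>
    tendsto_finsetSum _ fun k _ => ((hcont k).tendsto.comp (hr k)).const_mul (w k)
  have hsandwich : ∀ᶠ p in atTop, _ :=
    (eventually_gt_atTop 0).mono fun p hp => sSup_image_mroSet_mem_Icc hw he hε hp hne hbdd
  exact tendsto_of_tendsto_of_tendsto_of_le_of_le'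
    (hlim _ fun _ => tendsto_mul_rpow_neg_inv_atTop ε
      (add_pos_of_pos_of_nonneg one_pos (Finset.sum_nonneg fun j _ => (hw j).le)))
    (hlim _ fun k => tendsto_mul_rpow_neg_inv_atTop ε (hw k))
    (hsandwich.mono fun _ h => h.1) (hsandwich.mono fun _ h => h.2)

end MeanRobust

theorem stmt_7_general {m K : ℕ}
    (d : Fin K → EuclideanSpace ℝ (Fin m))
    (M : ℝ) (hM : 1 ≤ M)
    (w : Fin K → ℝ) (hw : ∀ k, 1 / M < w k ∧ w k < M)
    (S : Set (EuclideanSpace ℝ (Fin m)))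
    (nrm : EuclideanSpace ℝ (Fin m) → ℝ)
    (hnrm_add : ∀ x y, nrm (x + y) ≤ nrm x + nrm y)
    (hnrm_smul : ∀ (c : ℝ) x, nrm (c • x) = |c| * nrm x)
    (g : EuclideanSpace ℝ (Fin m) → ℝ)
    (ε : ℝ) (hε : 0 < ε)
    (gsup : ℝ → Fin K → ℝ)
    (hgsup : ∀ δ k, gsup δ k =
      sSup {t : ℝ | ∃ v ∈ S, nrm (v - d k) ≤ δ ∧ t = g v})
    (hne : ∀ k, ∀ δ > (0 : ℝ), ∃ v ∈ S, nrm (v - d k) ≤ δ)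
    (hbdd : ∀ k, ∀ δ > (0 : ℝ),
      BddAbove {t : ℝ | ∃ v ∈ S, nrm (v - d k) ≤ δ ∧ t = g v})
    (hcont : ∀ k, ContinuousOn (fun δ => gsup δ k) (Set.Ioi 0)) :
    Filter.Tendsto
      (fun p : ℝ => sSup {t : ℝ | ∃ v : Fin K → EuclideanSpace ℝ (Fin m),
        (∀ k, v k ∈ S) ∧
        ∑ k, w k * nrm (v k - d k) ^ p ≤ ε ^ p ∧
        t = ∑ k, w k * g (v k)})
      Filter.atTop (nhds (∑ k, w k * gsup ε k)) := by
  set e : Fin K → EuclideanSpace ℝ (Fin m) → ℝ := fun k x => nrm (x - d k)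
  have hw₀ : ∀ k, 0 < w k := fun k => (one_div_pos.2 (zero_lt_one.trans_le hM)).trans (hw k).1
  have he : ∀ k x, 0 ≤ e k x := fun k x =>
    apply_nonneg (Seminorm.of (𝕜 := ℝ) nrm hnrm_add fun c x => by
      rw [hnrm_smul, Real.norm_eq_abs]) (x - d k)
  have hball : ∀ δ k,
      {t : ℝ | ∃ v ∈ S, nrm (v - d k) ≤ δ ∧ t = g v} = g '' {x ∈ S | e k x ≤ δ} :=
    fun δ k => by ext; simp [e, eq_comm, and_assoc]
  have hlocal : ∀ k, (fun δ => gsup δ k) = localSup S e g k := fun k => by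
    ext δ; rw [hgsup, hball]; rfl
  have hvalues : ∀ p, {t : ℝ | ∃ v : Fin K → EuclideanSpace ℝ (Fin m), (∀ k, v k ∈ S) ∧
      ∑ k, w k * nrm (v k - d k) ^ p ≤ ε ^ p ∧ t = ∑ k, w k * g (v k)} =
      (fun v => ∑ k, w k * g (v k)) '' mroSet w S e ε p := fun p => by
    ext; simp [mroSet, e, eq_comm, and_assoc]
  simp only [hvalues, show ∀ k, gsup ε k = localSup S e g k ε from fun k => congrFun (hlocal k) ε]
  exact tendsto_sSup_image_mroSet hw₀ he hε hne (fun k δ hδ => hball δ k ▸ hbdd k δ hδ)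
    fun k => hlocal k ▸ (hcont k).continuousAt (Ioi_mem_nhds hε)

/-- the worst-case value `ḡ(p)` over the order-`p` MRO uncertainty set
converges, as `p → ∞`, to the decoupled worst-case value `∑_k w_k g^ε(d_k)`. -/
theorem stmt_7 {m K : ℕ} (hK : 1 ≤ K)
    (d : Fin K → EuclideanSpace ℝ (Fin m))
    (M : ℝ) (hM : 1 ≤ M)
    (w : Fin K → ℝ) (hw : ∀ k, 1 / M < w k ∧ w k < M)
    (S : Set (EuclideanSpace ℝ (Fin m))) (hSne : S.Nonempty)
    (nrm : EuclideanSpace ℝ (Fin m) → ℝ)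
    (hnrm_add : ∀ x y, nrm (x + y) ≤ nrm x + nrm y)
    (hnrm_smul : ∀ (c : ℝ) x, nrm (c • x) = |c| * nrm x)
    (hnrm_def : ∀ x, nrm x = 0 → x = 0)
    (g : EuclideanSpace ℝ (Fin m) → ℝ)
    (ε : ℝ) (hε : 0 < ε)
    (gsup : ℝ → Fin K → ℝ)
    (hgsup : ∀ δ k, gsup δ k =
      sSup {t : ℝ | ∃ v ∈ S, nrm (v - d k) ≤ δ ∧ t = g v})
    (hne : ∀ k, ∀ δ > (0 : ℝ), ∃ v ∈ S, nrm (v - d k) ≤ δ)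
    (hbdd : ∀ k, ∀ δ > (0 : ℝ),
      BddAbove {t : ℝ | ∃ v ∈ S, nrm (v - d k) ≤ δ ∧ t = g v})
    (hcont : ∀ k, ContinuousOn (fun δ => gsup δ k) (Set.Ioi 0)) :
    Filter.Tendsto
      (fun p : ℝ => sSup {t : ℝ | ∃ v : Fin K → EuclideanSpace ℝ (Fin m),
        (∀ k, v k ∈ S) ∧
        ∑ k, w k * nrm (v k - d k) ^ p ≤ ε ^ p ∧
        t = ∑ k, w k * g (v k)})
      Filter.atTop (nhds (∑ k, w k * gsup ε k)) :=
  stmt_7_general d M hM w hw S nrm hnrm_add hnrm_smul g ε hε gsup hgsup hne hbdd hcont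
end

section
/- Fix an integer K ≥ 1, points d_1, …, d_K ∈ ℝ^m, a real M ≥ 1, weights w_1, …, w_K with 1/M < w_k < M for all k, a nonempty set S ⊆ ℝ^m, a norm ‖·‖ on ℝ^m, a function g : ℝ^m → ℝ, and ε > 0. For δ > 0 define g^δ(d) = sup{ g(v) : v ∈ S, ‖v − d‖ ≤ δ }, assumed finite at the radii appearing below. Then for every real p ≥ 1, ∑_{k=1}^K w_k g^{ε (MK)^{−1/p}}(d_k) ≤ sup{ ∑_{k=1}^K w_k g(v_k) : v_k ∈ S, ∑_{k=1}^K w_k ‖v_k − d_k‖^p ≤ ε^p } ≤ ∑_{k=1}^K w_k g^{ε M^{1/p}}(d_k). -/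
open scoped BigOperators

/-!
Write `δ⁻ = ε (MK)^{-1/p}` and `δ⁺ = ε M^{1/p}`. Since every weight is below `M`, any tuple with
`‖v_k - d_k‖ ≤ δ⁻` for all `k` has `∑ w_k ‖v_k - d_k‖^p ≤ K M (δ⁻)^p ≤ ε^p`, so choosing each `v_k`
almost optimal in its own ball gives the lower bound. Conversely, since every weight exceeds `1/M`,
a single term of a feasible tuple already forces `‖v_k - d_k‖^p ≤ M ε^p`, i.e. `‖v_k - d_k‖ ≤ δ⁺`,
and bounding each `g (v_k)` by the supremum over that ball gives the upper bound.
-/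

theorem Finset.sum_mul_csSup_le {ι : Type*} [Fintype ι] {c : ι → ℝ} (hc : ∀ k, 0 ≤ c k)
    {A : ι → Set ℝ} (hA : ∀ k, (A k).Nonempty) {b : ℝ}
    (h : ∀ a : ι → ℝ, (∀ k, a k ∈ A k) → ∑ k, c k * a k ≤ b) :
    ∑ k, c k * sSup (A k) ≤ b := by
  refine le_of_forall_pos_le_add fun η hη => ?_
  set s := ∑ k, c k + 1
  have hs : 0 < s := add_pos_of_nonneg_of_pos (Finset.sum_nonneg fun k _ => hc k) one_pos
  have hclose : ∀ k, ∃ a ∈ A k, sSup (A k) - η / s < a := fun k =>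
    exists_lt_of_lt_csSup (hA k) (sub_lt_self _ (div_pos hη hs))
  choose a ha hlt using hclose
  calc ∑ k, c k * sSup (A k) ≤ ∑ k, c k * (a k + η / s) :=
        Finset.sum_le_sum fun k _ => mul_le_mul_of_nonneg_left (by linarith [hlt k]) (hc k)
    _ = ∑ k, c k * a k + (∑ k, c k) * (η / s) := by
        simp only [mul_add, Finset.sum_add_distrib, Finset.sum_mul]
    _ ≤ b + s * (η / s) := by
        gcongr
        · exact h a ha
        · exact (lt_add_one _).le
    _ = b + η := by rw [mul_div_cancel₀ _ hs.ne']

namespace Real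

theorem mul_rpow_neg_inv_rpow {ε a p : ℝ} (hε : 0 ≤ ε) (ha : 0 ≤ a) (hp : p ≠ 0) :
    (ε * a ^ (-1 / p)) ^ p = ε ^ p * a⁻¹ := by
  rw [mul_rpow hε (rpow_nonneg ha _), ← rpow_mul ha, div_mul_cancel₀ _ hp, rpow_neg_one]

theorem le_mul_rpow_one_div_of_rpow_le {x ε a p : ℝ} (hx : 0 ≤ x) (hε : 0 ≤ ε) (ha : 0 ≤ a)
    (hp : 0 < p) (h : x ^ p ≤ ε ^ p * a) : x ≤ ε * a ^ (1 / p) := by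
  have hrhs : (ε * a ^ (1 / p)) ^ p = ε ^ p * a := by
    rw [mul_rpow hε (rpow_nonneg ha _), one_div, rpow_inv_rpow ha hp.ne']
  rwa [← rpow_le_rpow_iff hx (by positivity) hp, hrhs]

end Real

section WeightedBalls

variable {ι E : Type*} [Fintype ι] [Sub E]

/-- `g^δ(c)` of the paper is the supremum of this set. -/
def valuesInBall (S : Set E) (nrm g : E → ℝ) (c : E) (δ : ℝ) : Set ℝ :=
  {t | ∃ v ∈ S, nrm (v - c) ≤ δ ∧ t = g v}

/-- Objective values over the mean robust optimization (MRO) uncertainty set. -/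
def mroValues (S : Set E) (d : ι → E) (nrm g : E → ℝ) (w : ι → ℝ) (ε p : ℝ) : Set ℝ :=
  {t | ∃ v : ι → E, (∀ k, v k ∈ S) ∧ ∑ k, w k * nrm (v k - d k) ^ p ≤ ε ^ p ∧
    t = ∑ k, w k * g (v k)}

variable {S : Set E} {d : ι → E} {nrm g : E → ℝ} {w : ι → ℝ} {ε p M : ℝ}

theorem sum_mul_rpow_le_of_forall_le (hnrm : ∀ x, 0 ≤ nrm x) (hp : 0 ≤ p) (hM : 0 ≤ M)
    (hw : ∀ k, w k ≤ M) {δ : ℝ} {v : ι → E} (hv : ∀ k, nrm (v k - d k) ≤ δ) :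
    ∑ k, w k * nrm (v k - d k) ^ p ≤ Fintype.card ι * M * δ ^ p := by
  calc ∑ k, w k * nrm (v k - d k) ^ p ≤ ∑ _k : ι, M * δ ^ p :=
        Finset.sum_le_sum fun k _ => mul_le_mul (hw k)
          (Real.rpow_le_rpow (hnrm _) (hv k) hp) (Real.rpow_nonneg (hnrm _) p) hM
    _ = Fintype.card ι * M * δ ^ p := by
        rw [Finset.sum_const, Finset.card_univ, nsmul_eq_mul, mul_assoc]

theorem le_of_sum_mul_rpow_le (hnrm : ∀ x, 0 ≤ nrm x) (hε : 0 ≤ ε) (hp : 0 < p) (hM : 0 < M)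
    (hw : ∀ k, 1 / M < w k) {v : ι → E} (hv : ∑ k, w k * nrm (v k - d k) ^ p ≤ ε ^ p) (k : ι) :
    nrm (v k - d k) ≤ ε * M ^ (1 / p) := by
  have hw0 : ∀ k, 0 ≤ w k := fun k => (one_div_pos.2 hM).le.trans (hw k).le
  have hterm : w k * nrm (v k - d k) ^ p ≤ ε ^ p :=
    (Finset.single_le_sum (f := fun i => w i * nrm (v i - d i) ^ p) (fun i _ => mul_nonneg (hw0 i) (Real.rpow_nonneg (hnrm _) p))
      (Finset.mem_univ k)).trans hv
  have hMw : 1 ≤ M * w k := ((div_lt_iff₀' hM).1 (hw k)).le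
  refine Real.le_mul_rpow_one_div_of_rpow_le (hnrm _) hε hM.le hp ?_
  calc nrm (v k - d k) ^ p ≤ M * w k * nrm (v k - d k) ^ p :=
        le_mul_of_one_le_left (Real.rpow_nonneg (hnrm _) p) hMw
    _ ≤ M * ε ^ p := by rw [mul_assoc]; exact mul_le_mul_of_nonneg_left hterm hM.le
    _ = ε ^ p * M := mul_comm _ _

theorem le_sum_mul_csSup_of_mem_mroValues (hw : ∀ k, 0 ≤ w k) {δ : ℝ}
    (hball : ∀ v : ι → E, ∑ k, w k * nrm (v k - d k) ^ p ≤ ε ^ p → ∀ k, nrm (v k - d k) ≤ δ)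
    (hbdd : ∀ k, BddAbove (valuesInBall S nrm g (d k) δ)) {t : ℝ}
    (ht : t ∈ mroValues S d nrm g w ε p) :
    t ≤ ∑ k, w k * sSup (valuesInBall S nrm g (d k) δ) := by
  obtain ⟨v, hvS, hv, rfl⟩ := ht
  exact Finset.sum_le_sum fun k _ => mul_le_mul_of_nonneg_left
    (le_csSup (hbdd k) ⟨v k, hvS k, hball v hv k, rfl⟩) (hw k)

theorem sum_mul_csSup_le_csSup_mroValues (hw : ∀ k, 0 ≤ w k) {δ : ℝ}
    (hne : ∀ k, ∃ v ∈ S, nrm (v - d k) ≤ δ)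
    (hfeas : ∀ v : ι → E, (∀ k, nrm (v k - d k) ≤ δ) → ∑ k, w k * nrm (v k - d k) ^ p ≤ ε ^ p)
    (hbdd : BddAbove (mroValues S d nrm g w ε p)) :
    ∑ k, w k * sSup (valuesInBall S nrm g (d k) δ) ≤ sSup (mroValues S d nrm g w ε p) := by
  refine Finset.sum_mul_csSup_le hw (fun k => ?_) fun a ha => ?_
  · obtain ⟨v, hvS, hv⟩ := hne k
    exact ⟨g v, v, hvS, hv, rfl⟩
  · choose v hvS hv hav using ha
    refine le_csSup hbdd ⟨v, hvS, hfeas v hv, ?_⟩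
    simp only [hav]

end WeightedBalls

theorem stmt_8_general {m K : ℕ}
    (d : Fin K → EuclideanSpace ℝ (Fin m))
    (M : ℝ) (hM : 1 ≤ M)
    (w : Fin K → ℝ) (hw : ∀ k, 1 / M < w k ∧ w k < M)
    (S : Set (EuclideanSpace ℝ (Fin m)))
    (nrm : EuclideanSpace ℝ (Fin m) → ℝ)
    (hnrm_add : ∀ x y, nrm (x + y) ≤ nrm x + nrm y)
    (hnrm_smul : ∀ (c : ℝ) x, nrm (c • x) = |c| * nrm x)
    (g : EuclideanSpace ℝ (Fin m) → ℝ)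
    (ε : ℝ) (hε : 0 < ε)
    (p : ℝ) (hp : 1 ≤ p)
    (gsup : ℝ → Fin K → ℝ)
    (hgsup : ∀ δ k, gsup δ k =
      sSup {t : ℝ | ∃ v ∈ S, nrm (v - d k) ≤ δ ∧ t = g v})
    (hne_lo : ∀ k, ∃ v ∈ S, nrm (v - d k) ≤ ε * (M * K) ^ (-(1 : ℝ) / p))
    (hbdd_hi : ∀ k,
      BddAbove {t : ℝ | ∃ v ∈ S, nrm (v - d k) ≤ ε * M ^ ((1 : ℝ) / p) ∧ t = g v}) :
    ∑ k, w k * gsup (ε * (M * K) ^ (-(1 : ℝ) / p)) k ≤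
      sSup {t : ℝ | ∃ v : Fin K → EuclideanSpace ℝ (Fin m),
        (∀ k, v k ∈ S) ∧
        ∑ k, w k * nrm (v k - d k) ^ p ≤ ε ^ p ∧
        t = ∑ k, w k * g (v k)} ∧
    sSup {t : ℝ | ∃ v : Fin K → EuclideanSpace ℝ (Fin m),
        (∀ k, v k ∈ S) ∧
        ∑ k, w k * nrm (v k - d k) ^ p ≤ ε ^ p ∧
        t = ∑ k, w k * g (v k)} ≤
      ∑ k, w k * gsup (ε * M ^ ((1 : ℝ) / p)) k := by
  have hnrm : ∀ x, 0 ≤ nrm x :=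
    apply_nonneg (Seminorm.of (𝕜 := ℝ) nrm hnrm_add fun c x => by rw [hnrm_smul, Real.norm_eq_abs])
  have hM0 : 0 < M := one_pos.trans_le hM
  have hp0 : 0 < p := one_pos.trans_le hp
  have hw0 : ∀ k, 0 ≤ w k := fun k => (one_div_pos.2 hM0).le.trans (hw k).1.le
  have hle := fun t (ht : t ∈ mroValues S d nrm g w ε p) => le_sum_mul_csSup_of_mem_mroValues hw0
    (fun _ hv => le_of_sum_mul_rpow_le hnrm hε.le hp0 hM0 (fun k => (hw k).1) hv) hbdd_hi ht
  have hfeas : ∀ v : Fin K → EuclideanSpace ℝ (Fin m),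
      (∀ k, nrm (v k - d k) ≤ ε * (M * K) ^ (-(1 : ℝ) / p)) →
        ∑ k, w k * nrm (v k - d k) ^ p ≤ ε ^ p := fun v hv => by
    have hMK : 0 ≤ M * K := by positivity
    calc _ ≤ K * M * (ε * (M * K) ^ (-(1 : ℝ) / p)) ^ p := by
          simpa using sum_mul_rpow_le_of_forall_le hnrm hp0.le hM0.le (fun k => (hw k).2.le) hv
      _ = ε ^ p * ((M * K) * (M * K)⁻¹) := by
          rw [Real.mul_rpow_neg_inv_rpow hε.le hMK hp0.ne']; ring
      _ ≤ ε ^ p := mul_le_of_le_one_right (by positivity) mul_inv_le_one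
  simp only [hgsup]
  refine ⟨sum_mul_csSup_le_csSup_mroValues hw0 hne_lo hfeas ⟨_, hle⟩, csSup_le ?_ hle⟩
  choose v hvS hv using hne_lo
  exact ⟨_, v, hvS, hfeas v hv, rfl⟩

/-- sandwich inequality for the worst-case value over the order-`p`
MRO uncertainty set between decoupled worst-case values at shrunken radius
`ε (MK)^{-1/p}` and enlarged radius `ε M^{1/p}`. -/
theorem stmt_8 {m K : ℕ} (hK : 1 ≤ K)
    (d : Fin K → EuclideanSpace ℝ (Fin m))
    (M : ℝ) (hM : 1 ≤ M)
    (w : Fin K → ℝ) (hw : ∀ k, 1 / M < w k ∧ w k < M)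
    (S : Set (EuclideanSpace ℝ (Fin m))) (hSne : S.Nonempty)
    (nrm : EuclideanSpace ℝ (Fin m) → ℝ)
    (hnrm_add : ∀ x y, nrm (x + y) ≤ nrm x + nrm y)
    (hnrm_smul : ∀ (c : ℝ) x, nrm (c • x) = |c| * nrm x)
    (hnrm_def : ∀ x, nrm x = 0 → x = 0)
    (g : EuclideanSpace ℝ (Fin m) → ℝ)
    (ε : ℝ) (hε : 0 < ε)
    (p : ℝ) (hp : 1 ≤ p)
    (gsup : ℝ → Fin K → ℝ)
    (hgsup : ∀ δ k, gsup δ k =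
      sSup {t : ℝ | ∃ v ∈ S, nrm (v - d k) ≤ δ ∧ t = g v})
    (hne_lo : ∀ k, ∃ v ∈ S, nrm (v - d k) ≤ ε * (M * K) ^ (-(1 : ℝ) / p))
    (hbdd_lo : ∀ k,
      BddAbove {t : ℝ | ∃ v ∈ S, nrm (v - d k) ≤ ε * (M * K) ^ (-(1 : ℝ) / p) ∧ t = g v})
    (hne_hi : ∀ k, ∃ v ∈ S, nrm (v - d k) ≤ ε * M ^ ((1 : ℝ) / p))
    (hbdd_hi : ∀ k,
      BddAbove {t : ℝ | ∃ v ∈ S, nrm (v - d k) ≤ ε * M ^ ((1 : ℝ) / p) ∧ t = g v}) :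
    ∑ k, w k * gsup (ε * (M * K) ^ (-(1 : ℝ) / p)) k ≤
      sSup {t : ℝ | ∃ v : Fin K → EuclideanSpace ℝ (Fin m),
        (∀ k, v k ∈ S) ∧
        ∑ k, w k * nrm (v k - d k) ^ p ≤ ε ^ p ∧
        t = ∑ k, w k * g (v k)} ∧
    sSup {t : ℝ | ∃ v : Fin K → EuclideanSpace ℝ (Fin m),
        (∀ k, v k ∈ S) ∧
        ∑ k, w k * nrm (v k - d k) ^ p ≤ ε ^ p ∧
        t = ∑ k, w k * g (v k)} ≤
      ∑ k, w k * gsup (ε * M ^ ((1 : ℝ) / p)) k :=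
  stmt_8_general d M hM w hw S nrm hnrm_add hnrm_smul g ε hε p hp gsup hgsup hne_lo hbdd_hi
end

section
/- Fix reals λ > 0 and a ≥ 0, and for q > 1 let φ(q) = (q−1)^{q−1}/q^q. If a ≤ λ, then φ(q) λ^{1−q} a^q → 0 as q → ∞; and if a > λ, then φ(q) λ^{1−q} a^q → +∞ as q → ∞. -/
/-!
Write `φ(q) λ^{1-q} a^q = (1 - 1/q)^{q-1} · λ · (a/λ)^q / q`. The factor `(1 - 1/q)^{q-1}` stays
in `[e⁻¹, 1]` (the lower bound is `log x ≥ 1 - 1/x`), so the quantity is squeezed between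
constant multiples of `(a/λ)^q / q`, which tends to `0` when `a ≤ λ` and to `+∞` when `a > λ`.
-/

open Real Filter

lemma exp_neg_one_le_div_rpow_sub_one {q : ℝ} (hq : 1 < q) :
    exp (-1) ≤ ((q - 1) / q) ^ (q - 1) := by
  have hpos : 0 < (q - 1) / q := div_pos (by linarith) (by linarith)
  have hlog : -1 ≤ (q - 1) * log ((q - 1) / q) := by
    have := one_sub_inv_le_log_of_pos hpos
    rw [inv_div] at this
    calc (-1 : ℝ) = (q - 1) * (1 - q / (q - 1)) := by
          field_simp [(sub_pos.mpr hq).ne']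
          ring
      _ ≤ (q - 1) * log ((q - 1) / q) := by gcongr
  rw [rpow_def_of_pos hpos, mul_comm]
  exact exp_le_exp.mpr hlog

lemma div_rpow_sub_one_le_one {q : ℝ} (hq : 1 ≤ q) : ((q - 1) / q) ^ (q - 1) ≤ 1 :=
  rpow_le_one (div_nonneg (by linarith) (by linarith))
    (div_le_one_of_le₀ (by linarith) (by linarith)) (by linarith)

lemma rpow_one_sub_mul_rpow {lam a : ℝ} (hlam : 0 < lam) (ha : 0 ≤ a) (q : ℝ) :
    lam ^ (1 - q) * a ^ q = lam * (a / lam) ^ q := by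
  rw [div_rpow ha hlam.le, rpow_sub hlam, rpow_one]
  ring

lemma sub_one_rpow_div_rpow_mul_rpow_mul_rpow {lam a q : ℝ} (hlam : 0 < lam) (ha : 0 ≤ a)
    (hq : 1 ≤ q) :
    (q - 1) ^ (q - 1) / q ^ q * lam ^ (1 - q) * a ^ q
      = ((q - 1) / q) ^ (q - 1) * lam * ((a / lam) ^ q / q) := by
  have hq0 : 0 < q := by linarith
  rw [mul_assoc, rpow_one_sub_mul_rpow hlam ha, div_rpow (by linarith) hq0.le,
    rpow_sub_one hq0.ne']
  field_simp

lemma tendsto_rpow_div_self_atTop {b : ℝ} (hb : 1 < b) :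
    Tendsto (fun x : ℝ => b ^ x / x) atTop atTop := by
  refine (tendsto_exp_mul_div_rpow_atTop 1 (log b) (log_pos hb)).congr fun x => ?_
  rw [rpow_one, rpow_def_of_pos (by linarith)]

/-- limits of `φ(q) λ^{1-q} a^q` as `q → ∞`:
`0` when `a ≤ λ` and `+∞` when `a > λ`. -/
theorem stmt_12 (lam a : ℝ) (hlam : 0 < lam) (ha : 0 ≤ a) :
    (a ≤ lam →
      Filter.Tendsto (fun q : ℝ => (q - 1) ^ (q - 1) / q ^ q * lam ^ (1 - q) * a ^ q)
        Filter.atTop (nhds 0)) ∧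
    (lam < a →
      Filter.Tendsto (fun q : ℝ => (q - 1) ^ (q - 1) / q ^ q * lam ^ (1 - q) * a ^ q)
        Filter.atTop Filter.atTop) := by
  have hform : (fun q : ℝ => ((q - 1) / q) ^ (q - 1) * lam * ((a / lam) ^ q / q))
      =ᶠ[atTop] fun q : ℝ => (q - 1) ^ (q - 1) / q ^ q * lam ^ (1 - q) * a ^ q :=
    (eventually_ge_atTop 1).mono fun q hq =>
      (sub_one_rpow_div_rpow_mul_rpow_mul_rpow hlam ha hq).symm
  refine ⟨fun hle => ?_, fun hlt => ?_⟩
  · refine Tendsto.congr' hform (squeeze_zero' ?_ ?_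
      (by simpa using tendsto_inv_atTop_zero.const_mul lam))
    · filter_upwards [eventually_ge_atTop 1] with q hq
      have : 0 ≤ (q - 1) / q := div_nonneg (by linarith) (by linarith)
      positivity
    · filter_upwards [eventually_ge_atTop 1] with q hq
      have hbase : (a / lam) ^ q ≤ 1 :=
        rpow_le_one (div_nonneg ha hlam.le) ((div_le_one hlam).mpr hle) (by linarith)
      calc ((q - 1) / q) ^ (q - 1) * lam * ((a / lam) ^ q / q) ≤ 1 * lam * (1 / q) := by
            gcongr
            · exact div_rpow_sub_one_le_one hq
          _ = lam * q⁻¹ := by ring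
  · refine Tendsto.congr' hform (tendsto_atTop_mono' _ ?_
      ((tendsto_rpow_div_self_atTop ((one_lt_div hlam).mpr hlt)).const_mul_atTop
        (mul_pos (exp_pos (-1)) hlam)))
    filter_upwards [eventually_gt_atTop 1] with q hq
    gcongr
    exact exp_neg_one_le_div_rpow_sub_one hq
end

section
/- Let ‖·‖ be a norm on ℝ^m with dual norm ‖z‖_* = sup{⟨z, u⟩ : ‖u‖ ≤ 1}, let S ⊆ ℝ^m be nonempty, let g : ℝ^m → ℝ, and fix d ∈ ℝ^m, ε ≥ 0, and z, y ∈ ℝ^m. Define the conjugate [−g]^*(w) = sup_{u ∈ ℝ^m} (⟨w, u⟩ + g(u)) and the support function σ_S(y) = sup_{u ∈ S} ⟨y, u⟩ (both valued in the extended reals). Then, in the extended reals, sup{ g(v) : v ∈ S, ‖v − d‖ ≤ ε } ≤ [−g]^*(z − y) + σ_S(y) − ⟨z, d⟩ + ε ‖z‖_*. -/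
/-! For `v ∈ S` with `‖v - d‖ ≤ ε`, split
`g v = (⟪z - y, v⟫ + g v) + ⟪y, v⟫ - ⟪z, d⟫ + ⟪z, d - v⟫`: the first two terms are bounded by
`[-g]^*(z - y)` and `σ_S(y)`, and the last by `‖d - v‖ ‖z‖_* ≤ ε ‖z‖_*` (Hölder for the dual
norm). The dual norm is a real supremum, so it is only meaningful because the unit ball of a norm
on a finite-dimensional space is bounded; this comes from the compactness of the Euclidean unit
sphere. -/

open Metric
open scoped RealInnerProductSpace

namespace Seminorm

theorem exists_pos_mul_norm_le {E : Type*} [NormedAddCommGroup E] [NormedSpace ℝ E]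
    [FiniteDimensional ℝ E] (p : Seminorm ℝ E) (hp : ∀ x, p x = 0 → x = 0) :
    ∃ c > 0, ∀ x, c * ‖x‖ ≤ p x := by
  rcases subsingleton_or_nontrivial E with _ | _
  · exact ⟨1, one_pos, fun x => by simp [Subsingleton.elim x 0]⟩
  -- a seminorm is convex, hence continuous in finite dimension
  obtain ⟨x₀, hx₀, hmin⟩ := (isCompact_sphere (0 : E) 1).exists_isMinOn
    (NormedSpace.sphere_nonempty.2 zero_le_one) p.convexOn.locallyLipschitz.continuous.continuousOn
  have hx₀_ne : x₀ ≠ 0 := ne_zero_of_mem_unit_sphere ⟨x₀, hx₀⟩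
  refine ⟨p x₀, (apply_nonneg p x₀).lt_of_ne fun h => hx₀_ne (hp x₀ h.symm), fun x => ?_⟩
  rcases eq_or_ne x 0 with rfl | hx
  · simp
  have hx_pos : 0 < ‖x‖ := norm_pos_iff.2 hx
  have hsphere : ‖x‖⁻¹ • x ∈ sphere (0 : E) 1 := by
    simp [norm_smul, hx_pos.ne']
  calc p x₀ * ‖x‖ ≤ p (‖x‖⁻¹ • x) * ‖x‖ := by gcongr; exact hmin hsphere
    _ = p x := by rw [map_smul_eq_mul, norm_inv, norm_norm]; field_simp

section InnerProductSpace

variable {E : Type*} [NormedAddCommGroup E] [InnerProductSpace ℝ E]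

noncomputable def dualNorm (p : Seminorm ℝ E) (z : E) : ℝ :=
  sSup {t : ℝ | ∃ u, p u ≤ 1 ∧ t = ⟪z, u⟫}

theorem inner_le_dualNorm [FiniteDimensional ℝ E] (p : Seminorm ℝ E)
    (hp : ∀ x, p x = 0 → x = 0) (z : E) {u : E} (hu : p u ≤ 1) : ⟪z, u⟫ ≤ p.dualNorm z := by
  obtain ⟨c, hc, hcp⟩ := p.exists_pos_mul_norm_le hp
  refine le_csSup ⟨‖z‖ * c⁻¹, ?_⟩ ⟨u, hu, rfl⟩
  rintro _ ⟨v, hv, rfl⟩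
  have hv_norm : ‖v‖ ≤ c⁻¹ := by
    rw [← mul_one c⁻¹, le_inv_mul_iff₀ hc]
    exact (hcp v).trans hv
  calc ⟪z, v⟫ ≤ ‖z‖ * ‖v‖ := real_inner_le_norm z v
    _ ≤ ‖z‖ * c⁻¹ := by gcongr

theorem dualNorm_nonneg [FiniteDimensional ℝ E] (p : Seminorm ℝ E)
    (hp : ∀ x, p x = 0 → x = 0) (z : E) : 0 ≤ p.dualNorm z :=
  (inner_zero_right z).symm.trans_le (p.inner_le_dualNorm hp z (by simp))

theorem inner_le_mul_dualNorm [FiniteDimensional ℝ E] (p : Seminorm ℝ E)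
    (hp : ∀ x, p x = 0 → x = 0) (z w : E) : ⟪z, w⟫ ≤ p w * p.dualNorm z := by
  rcases (apply_nonneg p w).eq_or_lt' with hw | hw
  · simp [hp w hw]
  have hunit : p ((p w)⁻¹ • w) ≤ 1 := by
    rw [map_smul_eq_mul, Real.norm_eq_abs, abs_inv, abs_of_pos hw, inv_mul_cancel₀ hw.ne']
  have := p.inner_le_dualNorm hp z hunit
  rwa [real_inner_smul_right, inv_mul_le_iff₀ hw] at this

end InnerProductSpace

end Seminorm

theorem stmt_16_general {m : ℕ}
    (nrm : EuclideanSpace ℝ (Fin m) → ℝ)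
    (hnrm_add : ∀ x y, nrm (x + y) ≤ nrm x + nrm y)
    (hnrm_smul : ∀ (c : ℝ) x, nrm (c • x) = |c| * nrm x)
    (hnrm_def : ∀ x, nrm x = 0 → x = 0)
    (dualNrm : EuclideanSpace ℝ (Fin m) → ℝ)
    (hdualNrm : ∀ z, dualNrm z = sSup {t : ℝ | ∃ u, nrm u ≤ 1 ∧ t = ⟪z, u⟫})
    (S : Set (EuclideanSpace ℝ (Fin m)))
    (g : EuclideanSpace ℝ (Fin m) → ℝ)
    (d : EuclideanSpace ℝ (Fin m)) (ε : ℝ)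
    (z y : EuclideanSpace ℝ (Fin m))
    (conj : EuclideanSpace ℝ (Fin m) → EReal)
    (hconj : ∀ w, conj w = ⨆ u : EuclideanSpace ℝ (Fin m), ((⟪w, u⟫ + g u : ℝ) : EReal))
    (sigmaS : EuclideanSpace ℝ (Fin m) → EReal)
    (hsigmaS : ∀ y', sigmaS y' = sSup {t : EReal | ∃ u ∈ S, t = ((⟪y', u⟫ : ℝ) : EReal)}) :
    sSup {t : EReal | ∃ v ∈ S, nrm (v - d) ≤ ε ∧ t = ((g v : ℝ) : EReal)} ≤
      conj (z - y) + sigmaS y + ((-⟪z, d⟫ + ε * dualNrm z : ℝ) : EReal) := by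
  let p : Seminorm ℝ (EuclideanSpace ℝ (Fin m)) :=
    Seminorm.of nrm hnrm_add fun c x => by rw [hnrm_smul, Real.norm_eq_abs]
  have hdual : dualNrm z = p.dualNorm z := hdualNrm z
  refine sSup_le ?_
  rintro _ ⟨v, hvS, hvd, rfl⟩
  have hconj_v : ((⟪z - y, v⟫ + g v : ℝ) : EReal) ≤ conj (z - y) :=
    (hconj _).symm ▸ le_iSup (fun u => ((⟪z - y, u⟫ + g u : ℝ) : EReal)) v
  have hsigma_v : ((⟪y, v⟫ : ℝ) : EReal) ≤ sigmaS y := (hsigmaS y).symm ▸ le_sSup ⟨v, hvS, rfl⟩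
  have hball : ⟪z, d - v⟫ ≤ ε * dualNrm z := by
    rw [hdual]
    calc ⟪z, d - v⟫ ≤ p (d - v) * p.dualNorm z := p.inner_le_mul_dualNorm hnrm_def z _
      _ ≤ ε * p.dualNorm z := by
        gcongr
        · exact p.dualNorm_nonneg hnrm_def z
        · rw [map_sub_rev]; exact hvd
  have hreal : g v ≤ (⟪z - y, v⟫ + g v) + ⟪y, v⟫ + (-⟪z, d⟫ + ε * dualNrm z) := by
    rw [inner_sub_right] at hball
    rw [inner_sub_left]
    linarith
  calc ((g v : ℝ) : EReal)
      ≤ (((⟪z - y, v⟫ + g v) + ⟪y, v⟫ + (-⟪z, d⟫ + ε * dualNrm z) : ℝ) : EReal) :=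
        EReal.coe_le_coe hreal
    _ = ((⟪z - y, v⟫ + g v : ℝ) : EReal) + ((⟪y, v⟫ : ℝ) : EReal)
          + ((-⟪z, d⟫ + ε * dualNrm z : ℝ) : EReal) := by
        rw [EReal.coe_add, EReal.coe_add]
    _ ≤ conj (z - y) + sigmaS y + ((-⟪z, d⟫ + ε * dualNrm z : ℝ) : EReal) := by
        gcongr

/-- weak duality for the `p = ∞` MRO constraint: the worst-case value
of `g` over the norm ball of radius `ε` around `d` intersected with `S` is bounded by
`[-g]^*(z - y) + σ_S(y) - ⟨z, d⟩ + ε ‖z‖_*` for any dual variables `z, y`. -/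
theorem stmt_16 {m : ℕ}
    (nrm : EuclideanSpace ℝ (Fin m) → ℝ)
    (hnrm_add : ∀ x y, nrm (x + y) ≤ nrm x + nrm y)
    (hnrm_smul : ∀ (c : ℝ) x, nrm (c • x) = |c| * nrm x)
    (hnrm_def : ∀ x, nrm x = 0 → x = 0)
    (dualNrm : EuclideanSpace ℝ (Fin m) → ℝ)
    (hdualNrm : ∀ z, dualNrm z = sSup {t : ℝ | ∃ u, nrm u ≤ 1 ∧ t = ⟪z, u⟫})
    (S : Set (EuclideanSpace ℝ (Fin m))) (hSne : S.Nonempty)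
    (g : EuclideanSpace ℝ (Fin m) → ℝ)
    (d : EuclideanSpace ℝ (Fin m)) (ε : ℝ) (hε : 0 ≤ ε)
    (z y : EuclideanSpace ℝ (Fin m))
    (conj : EuclideanSpace ℝ (Fin m) → EReal)
    (hconj : ∀ w, conj w = ⨆ u : EuclideanSpace ℝ (Fin m), ((⟪w, u⟫ + g u : ℝ) : EReal))
    (sigmaS : EuclideanSpace ℝ (Fin m) → EReal)
    (hsigmaS : ∀ y', sigmaS y' = sSup {t : EReal | ∃ u ∈ S, t = ((⟪y', u⟫ : ℝ) : EReal)}) :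
    sSup {t : EReal | ∃ v ∈ S, nrm (v - d) ≤ ε ∧ t = ((g v : ℝ) : EReal)} ≤
      conj (z - y) + sigmaS y + ((-⟪z, d⟫ + ε * dualNrm z : ℝ) : EReal) :=
  stmt_16_general nrm hnrm_add hnrm_smul hnrm_def dualNrm hdualNrm S g d ε z y conj hconj sigmaS
    hsigmaS
end
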